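/- arXiv:2003.08192 — 3 statements merged into one kernel-verified Lean document; each statement's English description precedes it below -/
import Mathlib

section
/- For every permutation σ of [n], inv(σ) = exc(σ) + ucross(σ) + 2·unest(σ) + lcross(σ) + ljoin(σ) + 2·lnest(σ) + 2·lpsnest(σ); equivalently, inv(σ) = cval(σ) + cdrise(σ) + cdfall(σ) + ucross(σ) + lcross(σ) + 2·(unest(σ) + lnest(σ) + psnest(σ)). -/
namespace Paper

/-! ### Motzkin paths, Dyck paths, and Flajolet's continued-fraction weights -/

inductive MStep : Type
  | up : MStep
  | down : MStep
  | flat : MStep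
  deriving DecidableEq

instance : Fintype MStep :=
  ⟨{MStep.up, MStep.down, MStep.flat}, fun x => by cases x <;> simp⟩

noncomputable section

/-- Height increment of a single step. -/
def MStep.val : MStep → ℤ
  | .up => 1
  | .down => -1
  | .flat => 0

/-- The height of the lattice path `ω` after its first `i` steps. -/
def height {n : ℕ} (ω : Fin n → MStep) (i : ℕ) : ℤ :=
  ∑ j ∈ Finset.univ.filter (fun j : Fin n => (j : ℕ) < i), (ω j).val

open Classical in
/-- Motzkin paths of length `n`: lattice paths from `(0,0)` to `(n,0)` with steps
`(1,1)`, `(1,-1)` and `(1,0)`, staying at heights `≥ 0`. -/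
def motzkinPaths (n : ℕ) : Finset (Fin n → MStep) :=
  Finset.univ.filter fun ω =>
    (∀ i ∈ Finset.range (n + 1), 0 ≤ height ω i) ∧ height ω n = 0

/-- Dyck paths of length `n`: Motzkin paths having no level step. -/
def dyckPaths (n : ℕ) : Finset (Fin n → MStep) :=
  (motzkinPaths n).filter fun ω => ∀ i, ω i ≠ MStep.flat

/-- The weight of a Motzkin path for the J-type continued fraction with coefficients
`γ` (one factor `γ h` for each level step at height `h`) and `β` (one factor `β h`
for each fall starting at height `h`); rises have weight `1`. -/
def jweight {R : Type*} [CommRing R] {n : ℕ} (γ β : ℕ → R) (ω : Fin n → MStep) : R :=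
  ∏ i : Fin n,
    match ω i with
    | MStep.up => (1 : R)
    | MStep.down => β (height ω (i : ℕ)).toNat
    | MStep.flat => γ (height ω (i : ℕ)).toNat

/-- The weight of a Dyck path for the S-type continued fraction with coefficients `α`
(one factor `α h` for each fall starting at height `h`); rises have weight `1`. -/
def sweight {R : Type*} [CommRing R] {n : ℕ} (α : ℕ → R) (ω : Fin n → MStep) : R :=
  ∏ i : Fin n,
    match ω i with
    | MStep.up => (1 : R)
    | MStep.down => α (height ω (i : ℕ)).toNat
    | MStep.flat => (0 : R)

/-- The `(p,q)`-integer `[m]_{p,q} = ∑_{j=0}^{m-1} p^j q^(m-1-j)`. -/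
def qint {R : Type*} [CommRing R] (p q : R) (m : ℕ) : R :=
  ∑ j ∈ Finset.range m, p ^ j * q ^ (m - 1 - j)

/-- `starSum f m = ∑_{ℓ=0}^{m} f ℓ (m-ℓ)`. -/
def starSum {R : Type*} [CommRing R] (f : ℕ → ℕ → R) (m : ℕ) : R :=
  ∑ ℓ ∈ Finset.range (m + 1), f ℓ (m - ℓ)

/-- `rowSum f m = ∑_{ℓ=0}^{m} f m ℓ`. -/
def rowSum {R : Type*} [CommRing R] (f : ℕ → ℕ → R) (m : ℕ) : R :=
  ∑ ℓ ∈ Finset.range (m + 1), f m ℓ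

/-! ### Generic counting helpers -/

/-- The number of indices `i : Fin n` satisfying `P i`. -/
def cnt {n : ℕ} (P : Fin n → Prop) : ℕ := Nat.card {i : Fin n // P i}

/-- The number of quadruplets `i < j < k < l` satisfying `C i j k l`. -/
def quad {n : ℕ} (C : Fin n → Fin n → Fin n → Fin n → Prop) : ℕ :=
  Nat.card {q : Fin n × Fin n × Fin n × Fin n //
    q.1 < q.2.1 ∧ q.2.1 < q.2.2.1 ∧ q.2.2.1 < q.2.2.2 ∧ C q.1 q.2.1 q.2.2.1 q.2.2.2}

/-- The number of triplets `i < j < l` satisfying `C i j l`. -/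
def trip {n : ℕ} (C : Fin n → Fin n → Fin n → Prop) : ℕ :=
  Nat.card {q : Fin n × Fin n × Fin n // q.1 < q.2.1 ∧ q.2.1 < q.2.2 ∧ C q.1 q.2.1 q.2.2}

/-! ### Permutation statistics -/

variable {n : ℕ}

/-- `i` is a record of `σ`. -/
def isRec (σ : Equiv.Perm (Fin n)) (i : Fin n) : Prop := ∀ j, j < i → σ j < σ i

/-- `i` is an antirecord of `σ`. -/
def isArec (σ : Equiv.Perm (Fin n)) (i : Fin n) : Prop := ∀ j, i < j → σ i < σ j

/-- `i` is an exclusive record of `σ`. -/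
def isERec (σ : Equiv.Perm (Fin n)) (i : Fin n) : Prop := isRec σ i ∧ ¬ isArec σ i

/-- `i` is an exclusive antirecord of `σ`. -/
def isEArec (σ : Equiv.Perm (Fin n)) (i : Fin n) : Prop := isArec σ i ∧ ¬ isRec σ i

/-- `i` is a neither-record-antirecord of `σ`. -/
def isNrar (σ : Equiv.Perm (Fin n)) (i : Fin n) : Prop := ¬ isRec σ i ∧ ¬ isArec σ i

/-- `i` is a cycle valley of `σ`. -/
def isCval (σ : Equiv.Perm (Fin n)) (i : Fin n) : Prop := i < σ i ∧ i < σ⁻¹ i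

/-- `i` is a cycle peak of `σ`. -/
def isCpeak (σ : Equiv.Perm (Fin n)) (i : Fin n) : Prop := σ i < i ∧ σ⁻¹ i < i

/-- `i` is a cycle double rise of `σ`. -/
def isCdrise (σ : Equiv.Perm (Fin n)) (i : Fin n) : Prop := σ⁻¹ i < i ∧ i < σ i

/-- `i` is a cycle double fall of `σ`. -/
def isCdfall (σ : Equiv.Perm (Fin n)) (i : Fin n) : Prop := σ i < i ∧ i < σ⁻¹ i

/-- `i` is a fixed point of `σ`. -/
def isFix (σ : Equiv.Perm (Fin n)) (i : Fin n) : Prop := σ i = i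

instance (σ : Equiv.Perm (Fin n)) : DecidablePred (isCval σ) := fun i =>
  inferInstanceAs (Decidable (i < σ i ∧ i < σ⁻¹ i))

instance (σ : Equiv.Perm (Fin n)) : DecidablePred (isCpeak σ) := fun i =>
  inferInstanceAs (Decidable (σ i < i ∧ σ⁻¹ i < i))

instance (σ : Equiv.Perm (Fin n)) : DecidablePred (isCdrise σ) := fun i =>
  inferInstanceAs (Decidable (σ⁻¹ i < i ∧ i < σ i))

instance (σ : Equiv.Perm (Fin n)) : DecidablePred (isCdfall σ) := fun i =>
  inferInstanceAs (Decidable (σ i < i ∧ i < σ⁻¹ i))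

instance (σ : Equiv.Perm (Fin n)) : DecidablePred (isFix σ) := fun i =>
  inferInstanceAs (Decidable (σ i = i))

/-- The number of excedances of `σ`. -/
def exc (σ : Equiv.Perm (Fin n)) : ℕ := cnt fun i => i < σ i

/-- The number of antirecords of `σ`. -/
def arec (σ : Equiv.Perm (Fin n)) : ℕ := cnt (isArec σ)

/-- The number of exclusive records of `σ`. -/
def erec (σ : Equiv.Perm (Fin n)) : ℕ := cnt (isERec σ)

/-- The number of inversions of `σ`. -/
def inversions (σ : Equiv.Perm (Fin n)) : ℕ :=
  Nat.card {p : Fin n × Fin n // p.1 < p.2 ∧ σ p.2 < σ p.1}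

/-- The number of cycles of `σ` (fixed points included). -/
def cyc (σ : Equiv.Perm (Fin n)) : ℕ := σ.cycleType.card + cnt (isFix σ)

/-- The level of an index `i`: `#{j < i : σ j > i}`. -/
def levAt (σ : Equiv.Perm (Fin n)) (i : Fin n) : ℕ := cnt fun j => j < i ∧ i < σ j

def eareccpeak (σ : Equiv.Perm (Fin n)) : ℕ := cnt fun i => isEArec σ i ∧ isCpeak σ i
def eareccdfall (σ : Equiv.Perm (Fin n)) : ℕ := cnt fun i => isEArec σ i ∧ isCdfall σ i
def ereccval (σ : Equiv.Perm (Fin n)) : ℕ := cnt fun i => isERec σ i ∧ isCval σ i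
def ereccdrise (σ : Equiv.Perm (Fin n)) : ℕ := cnt fun i => isERec σ i ∧ isCdrise σ i
def nrcpeak (σ : Equiv.Perm (Fin n)) : ℕ := cnt fun i => isNrar σ i ∧ isCpeak σ i
def nrcdfall (σ : Equiv.Perm (Fin n)) : ℕ := cnt fun i => isNrar σ i ∧ isCdfall σ i
def nrcval (σ : Equiv.Perm (Fin n)) : ℕ := cnt fun i => isNrar σ i ∧ isCval σ i
def nrcdrise (σ : Equiv.Perm (Fin n)) : ℕ := cnt fun i => isNrar σ i ∧ isCdrise σ i

/-- The number of upper crossings of `σ`. -/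
def ucross (σ : Equiv.Perm (Fin n)) : ℕ := quad fun i j k l => σ i = k ∧ σ j = l
/-- The number of lower crossings of `σ`. -/
def lcross (σ : Equiv.Perm (Fin n)) : ℕ := quad fun i j k l => σ k = i ∧ σ l = j
/-- The number of upper nestings of `σ`. -/
def unest (σ : Equiv.Perm (Fin n)) : ℕ := quad fun i j k l => σ i = l ∧ σ j = k
/-- The number of lower nestings of `σ`. -/
def lnest (σ : Equiv.Perm (Fin n)) : ℕ := quad fun i j k l => σ l = i ∧ σ k = j
/-- The number of upper joinings of `σ`. -/
def ujoin (σ : Equiv.Perm (Fin n)) : ℕ := trip fun i j l => σ i = j ∧ σ j = l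
/-- The number of lower joinings of `σ`. -/
def ljoin (σ : Equiv.Perm (Fin n)) : ℕ := trip fun i j l => σ j = i ∧ σ l = j
/-- The number of upper pseudo-nestings of `σ`. -/
def upsnest (σ : Equiv.Perm (Fin n)) : ℕ := trip fun i j l => σ j = j ∧ σ i = l
/-- The number of lower pseudo-nestings of `σ`. -/
def lpsnest (σ : Equiv.Perm (Fin n)) : ℕ := trip fun i j l => σ j = j ∧ σ l = i
/-- `psnest = upsnest (= lpsnest)`. -/
def psnest (σ : Equiv.Perm (Fin n)) : ℕ := upsnest σ

def ucrosscval (σ : Equiv.Perm (Fin n)) : ℕ :=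
  quad fun i j k l => σ i = k ∧ σ j = l ∧ j < σ⁻¹ j
def ucrosscdrise (σ : Equiv.Perm (Fin n)) : ℕ :=
  quad fun i j k l => σ i = k ∧ σ j = l ∧ σ⁻¹ j < j
def lcrosscpeak (σ : Equiv.Perm (Fin n)) : ℕ :=
  quad fun i j k l => σ k = i ∧ σ l = j ∧ σ⁻¹ k < k
def lcrosscdfall (σ : Equiv.Perm (Fin n)) : ℕ :=
  quad fun i j k l => σ k = i ∧ σ l = j ∧ k < σ⁻¹ k
def unestcval (σ : Equiv.Perm (Fin n)) : ℕ :=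
  quad fun i j k l => σ i = l ∧ σ j = k ∧ j < σ⁻¹ j
def unestcdrise (σ : Equiv.Perm (Fin n)) : ℕ :=
  quad fun i j k l => σ i = l ∧ σ j = k ∧ σ⁻¹ j < j
def lnestcpeak (σ : Equiv.Perm (Fin n)) : ℕ :=
  quad fun i j k l => σ l = i ∧ σ k = j ∧ σ⁻¹ k < k
def lnestcdfall (σ : Equiv.Perm (Fin n)) : ℕ :=
  quad fun i j k l => σ l = i ∧ σ k = j ∧ k < σ⁻¹ k

/-- `ucross (j, σ) = #{i<j<k<l : k = σ i, l = σ j}`. -/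
def ucrossAt (σ : Equiv.Perm (Fin n)) (j : Fin n) : ℕ :=
  Nat.card {t : Fin n × Fin n × Fin n //
    t.1 < j ∧ j < t.2.1 ∧ t.2.1 < t.2.2 ∧ σ t.1 = t.2.1 ∧ σ j = t.2.2}

/-- `unest (j, σ) = #{i<j<k<l : k = σ j, l = σ i}`. -/
def unestAt (σ : Equiv.Perm (Fin n)) (j : Fin n) : ℕ :=
  Nat.card {t : Fin n × Fin n × Fin n //
    t.1 < j ∧ j < t.2.1 ∧ t.2.1 < t.2.2 ∧ σ j = t.2.1 ∧ σ t.1 = t.2.2}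

/-- `lcross (k, σ) = #{i<j<k<l : i = σ k, j = σ l}`. -/
def lcrossAt (σ : Equiv.Perm (Fin n)) (k : Fin n) : ℕ :=
  Nat.card {t : Fin n × Fin n × Fin n //
    t.1 < t.2.1 ∧ t.2.1 < k ∧ k < t.2.2 ∧ σ k = t.1 ∧ σ t.2.2 = t.2.1}

/-- `lnest (k, σ) = #{i<j<k<l : i = σ l, j = σ k}`. -/
def lnestAt (σ : Equiv.Perm (Fin n)) (k : Fin n) : ℕ :=
  Nat.card {t : Fin n × Fin n × Fin n //
    t.1 < t.2.1 ∧ t.2.1 < k ∧ k < t.2.2 ∧ σ t.2.2 = t.1 ∧ σ k = t.2.1}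

/-! ### Set-partition statistics -/

open Classical in
/-- The set partitions of `{1, …, n}`, encoded as the collections of their blocks. -/
def setPartitions (n : ℕ) : Finset (Finset (Finset (Fin n))) :=
  Finset.univ.filter fun P =>
    (∀ B ∈ P, B.Nonempty) ∧ (∀ i : Fin n, ∃ B ∈ P, i ∈ B) ∧
      ∀ B ∈ P, ∀ C ∈ P, ∀ i : Fin n, i ∈ B → i ∈ C → B = C

/-- `(i, j)` is an edge of the graph `G_P`: `i < j` are consecutive elements of a
common block of `P`. -/
def arc (P : Finset (Finset (Fin n))) (i j : Fin n) : Prop :=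
  i < j ∧ ∃ B ∈ P, i ∈ B ∧ j ∈ B ∧ ∀ k ∈ B, ¬(i < k ∧ k < j)

instance (P : Finset (Finset (Fin n))) (i j : Fin n) : Decidable (arc P i j) :=
  inferInstanceAs
    (Decidable (i < j ∧ ∃ B ∈ P, i ∈ B ∧ j ∈ B ∧ ∀ k ∈ B, ¬(i < k ∧ k < j)))

/-- `i` is an opener: the smallest element of a block of size `≥ 2`. -/
def isOpener (P : Finset (Finset (Fin n))) (i : Fin n) : Prop :=
  ∃ B ∈ P, i ∈ B ∧ 2 ≤ B.card ∧ ∀ j ∈ B, i ≤ j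

/-- `i` is a closer: the largest element of a block of size `≥ 2`. -/
def isCloser (P : Finset (Finset (Fin n))) (i : Fin n) : Prop :=
  ∃ B ∈ P, i ∈ B ∧ 2 ≤ B.card ∧ ∀ j ∈ B, j ≤ i

/-- `i` is an insider: a non-smallest, non-largest element of a block of size `≥ 3`. -/
def isInsider (P : Finset (Finset (Fin n))) (i : Fin n) : Prop :=
  ∃ B ∈ P, i ∈ B ∧ 3 ≤ B.card ∧ (∃ j ∈ B, j < i) ∧ ∃ j ∈ B, i < j

/-- `i` is a singleton of `P`. -/
def isSingle (P : Finset (Finset (Fin n))) (i : Fin n) : Prop := {i} ∈ P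

instance (P : Finset (Finset (Fin n))) : DecidablePred (isOpener P) := fun i =>
  inferInstanceAs (Decidable (∃ B ∈ P, i ∈ B ∧ 2 ≤ B.card ∧ ∀ j ∈ B, i ≤ j))

instance (P : Finset (Finset (Fin n))) : DecidablePred (isCloser P) := fun i =>
  inferInstanceAs (Decidable (∃ B ∈ P, i ∈ B ∧ 2 ≤ B.card ∧ ∀ j ∈ B, j ≤ i))

instance (P : Finset (Finset (Fin n))) : DecidablePred (isInsider P) := fun i =>
  inferInstanceAs
    (Decidable (∃ B ∈ P, i ∈ B ∧ 3 ≤ B.card ∧ (∃ j ∈ B, j < i) ∧ ∃ j ∈ B, i < j))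

instance (P : Finset (Finset (Fin n))) : DecidablePred (isSingle P) := fun i =>
  inferInstanceAs (Decidable ({i} ∈ P))

/-- `i` is an exclusive record of the set partition `P`: `i` has a next-larger
element `l` in its block, and for every `j < i` the next-larger element of `j` in its
block (when it exists) is smaller than `l`. -/
def isERecP (P : Finset (Finset (Fin n))) (i : Fin n) : Prop :=
  ∃ l, arc P i l ∧ ∀ j, j < i → ∀ m, arc P j m → m < l

/-- The number of exclusive records of `P`. -/
def perecP (P : Finset (Finset (Fin n))) : ℕ := cnt (isERecP P)

/-- The number of singletons of `P`. -/
def singCount (P : Finset (Finset (Fin n))) : ℕ := cnt (isSingle P)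

/-- The number of blocks of `P` of size `≥ 2`. -/
def blkCount (P : Finset (Finset (Fin n))) : ℕ :=
  Nat.card {B : Finset (Fin n) // B ∈ P ∧ 2 ≤ B.card}

def erecinP (P : Finset (Finset (Fin n))) : ℕ := cnt fun i => isInsider P i ∧ isERecP P i
def erecopP (P : Finset (Finset (Fin n))) : ℕ := cnt fun i => isOpener P i ∧ isERecP P i
def nerecinP (P : Finset (Finset (Fin n))) : ℕ :=
  cnt fun i => isInsider P i ∧ ¬ isERecP P i
def nerecopP (P : Finset (Finset (Fin n))) : ℕ :=
  cnt fun i => isOpener P i ∧ ¬ isERecP P i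

/-- `cr (j, P) = #{i<j<k<l : (i,k) ∈ G_P and (j,l) ∈ G_P}`. -/
def crAt (P : Finset (Finset (Fin n))) (j : Fin n) : ℕ :=
  Nat.card {t : Fin n × Fin n × Fin n //
    t.1 < j ∧ j < t.2.1 ∧ t.2.1 < t.2.2 ∧ arc P t.1 t.2.1 ∧ arc P j t.2.2}

/-- `ne (j, P) = #{i<j<k<l : (i,l) ∈ G_P and (j,k) ∈ G_P}`. -/
def neAt (P : Finset (Finset (Fin n))) (j : Fin n) : ℕ :=
  Nat.card {t : Fin n × Fin n × Fin n //
    t.1 < j ∧ j < t.2.1 ∧ t.2.1 < t.2.2 ∧ arc P t.1 t.2.2 ∧ arc P j t.2.1}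

/-- `qne (j, P) = #{i<j<l : (i,l) ∈ G_P}`. -/
def qneAt (P : Finset (Finset (Fin n))) (j : Fin n) : ℕ :=
  Nat.card {p : Fin n × Fin n // p.1 < j ∧ j < p.2 ∧ arc P p.1 p.2}

/-- The total number of crossings of `P`. -/
def crP (P : Finset (Finset (Fin n))) : ℕ := quad fun i j k l => arc P i k ∧ arc P j l
/-- The number of crossings of `P` whose second index is an opener. -/
def cropP (P : Finset (Finset (Fin n))) : ℕ :=
  quad fun i j k l => arc P i k ∧ arc P j l ∧ isOpener P j
/-- The number of crossings of `P` whose second index is an insider. -/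
def crinP (P : Finset (Finset (Fin n))) : ℕ :=
  quad fun i j k l => arc P i k ∧ arc P j l ∧ isInsider P j
/-- The number of nestings of `P` whose second index is an opener. -/
def neopP (P : Finset (Finset (Fin n))) : ℕ :=
  quad fun i j k l => arc P i l ∧ arc P j k ∧ isOpener P j
/-- The number of nestings of `P` whose second index is an insider. -/
def neinP (P : Finset (Finset (Fin n))) : ℕ :=
  quad fun i j k l => arc P i l ∧ arc P j k ∧ isInsider P j
/-- The number of pseudo-nestings of `P`. -/
def psneP (P : Finset (Finset (Fin n))) : ℕ :=
  trip fun i j l => isSingle P j ∧ arc P i l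

/-- The smallest element of a block, as a natural number. -/
def bmin (B : Finset (Fin n)) : ℕ := sInf {m : ℕ | ∃ i ∈ B, (i : ℕ) = m}

/-- The largest element of a block, as a natural number. -/
def bmax (B : Finset (Fin n)) : ℕ := B.sup fun i => (i : ℕ)

/-- `ov (j, P) = #{(B₁,B₂) : j ∈ B₂, min B₁ < j < max B₁ < max B₂}`. -/
def ovAt (P : Finset (Finset (Fin n))) (j : Fin n) : ℕ :=
  Nat.card {p : Finset (Fin n) × Finset (Fin n) // p.1 ∈ P ∧ p.2 ∈ P ∧ j ∈ p.2 ∧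
    bmin p.1 < (j : ℕ) ∧ (j : ℕ) < bmax p.1 ∧ bmax p.1 < bmax p.2}

/-- `cov (j, P) = #{(B₁,B₂) : j ∈ B₂, min B₁ < j < max B₂ < max B₁}`. -/
def covAt (P : Finset (Finset (Fin n))) (j : Fin n) : ℕ :=
  Nat.card {p : Finset (Fin n) × Finset (Fin n) // p.1 ∈ P ∧ p.2 ∈ P ∧ j ∈ p.2 ∧
    bmin p.1 < (j : ℕ) ∧ (j : ℕ) < bmax p.2 ∧ bmax p.2 < bmax p.1}

/-- The number of overlaps of `P`: pairs of blocks with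
`min B₁ < min B₂ < max B₁ < max B₂`. -/
def ovP (P : Finset (Finset (Fin n))) : ℕ :=
  Nat.card {p : Finset (Fin n) × Finset (Fin n) // p.1 ∈ P ∧ p.2 ∈ P ∧
    bmin p.1 < bmin p.2 ∧ bmin p.2 < bmax p.1 ∧ bmax p.1 < bmax p.2}

/-- The number of coverings of `P`: pairs of blocks with
`min B₁ < min B₂ < max B₂ < max B₁`. -/
def covP (P : Finset (Finset (Fin n))) : ℕ :=
  Nat.card {p : Finset (Fin n) × Finset (Fin n) // p.1 ∈ P ∧ p.2 ∈ P ∧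
    bmin p.1 < bmin p.2 ∧ bmin p.2 < bmax p.2 ∧ bmax p.2 < bmax p.1}

/-- The number of pseudo-coverings of `P`: pairs of blocks with
`min B₁ < min B₂ = max B₂ < max B₁`. -/
def pscovP (P : Finset (Finset (Fin n))) : ℕ :=
  Nat.card {p : Finset (Fin n) × Finset (Fin n) // p.1 ∈ P ∧ p.2 ∈ P ∧
    bmin p.1 < bmin p.2 ∧ bmin p.2 = bmax p.2 ∧ bmax p.2 < bmax p.1}

/-- `ovin P = ∑_{j insider} ov (j, P)`. -/
def ovinP (P : Finset (Finset (Fin n))) : ℕ :=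
  ∑ j ∈ Finset.univ.filter (isInsider P), ovAt P j

/-- `covin P = ∑_{j insider} cov (j, P)`. -/
def covinP (P : Finset (Finset (Fin n))) : ℕ :=
  ∑ j ∈ Finset.univ.filter (isInsider P), covAt P j

/-- The intertwining number of two (disjoint nonempty) blocks `B`, `C`: the number of
pairs `(b,c) ∈ B × C` with no element of `B ∪ C` strictly between `b` and `c`. -/
def iota (B C : Finset (Fin n)) : ℕ :=
  Nat.card {p : Fin n × Fin n // p.1 ∈ B ∧ p.2 ∈ C ∧
    ∀ k ∈ B ∪ C, ¬(min p.1 p.2 < k ∧ k < max p.1 p.2)}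

/-- The intertwining number of a set partition: the sum of `iota B₁ B₂` over the
unordered pairs of distinct blocks, here enumerated by increasing minimum. -/
def iotaTotal (P : Finset (Finset (Fin n))) : ℕ :=
  ∑ B₁ ∈ P, ∑ B₂ ∈ P, if bmin B₁ < bmin B₂ then iota B₁ B₂ else 0

end

end Paper

/-!
Sort the inversions `a < b`, `σ b < σ a` by the types of `a` and `b`: two excedances form an
upper nesting, two anti-excedances a lower nesting, a fixed point and another index a
pseudo-nesting, and in the remaining, mixed, inversions `a` is an excedance and `b` an
anti-excedance. The key fact is that every gap between consecutive positions is crossed by as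
many arcs `i ↦ σ i` going right as going left. Hence the mixed inversions with `σ b ≤ a`, counted
by the arcs going left over the gap just after the excedance `a`, are as many as the arcs going
right over it: `a` itself, and the upper crossings and nestings with second point `a`. Likewise
those with `a < σ b`, counted by the arcs going right over the gap just before `σ b`, are as
many as the arcs going left over it: the lower crossings, nestings and joinings with second
point `σ b`. The same balance at a fixed point gives `upsnest = lpsnest`.
-/

open Finset

theorem Equiv.Perm.sum_boole_and_not_apply {α : Type*} [Fintype α] (σ : Equiv.Perm α)
    (p : α → Prop) [DecidablePred p] :
    (∑ x, if p x ∧ ¬ p (σ x) then 1 else 0 : ℕ) = ∑ x, if ¬ p x ∧ p (σ x) then 1 else 0 := by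
  have hperm : (∑ x, if p (σ x) then 1 else 0 : ℕ) = ∑ x, if p x then 1 else 0 :=
    Equiv.sum_comp σ fun x => if p x then 1 else 0
  have hpt : ∀ x, ((if p x ∧ ¬ p (σ x) then 1 else 0) + if p (σ x) then 1 else 0 : ℕ)
      = (if ¬ p x ∧ p (σ x) then 1 else 0) + if p x then 1 else 0 := by
    intro x; by_cases p x <;> by_cases p (σ x) <;> simp [*]
  have := Finset.sum_congr rfl fun x (_ : x ∈ univ) => hpt x
  rw [sum_add_distrib, sum_add_distrib, hperm] at this
  omega

theorem Fintype.sum_comm₄ {α M : Type*} [Fintype α] [AddCommMonoid M] (F : α → α → α → α → M) :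
    ∑ i, ∑ j, ∑ k, ∑ l, F i j k l = ∑ k, ∑ l, ∑ i, ∑ j, F i j k l := by
  simpa only [Fintype.sum_prod_type] using
    Finset.sum_comm (s := univ) (t := univ) (f := fun (p q : α × α) => F p.1 p.2 q.1 q.2)

theorem Equiv.Perm.sum_boole_lt_le_apply {α : Type*} [Fintype α] [LinearOrder α]
    (σ : Equiv.Perm α) (t : α) :
    (∑ a, if a < t ∧ t ≤ σ a then 1 else 0 : ℕ) = ∑ a, if t ≤ a ∧ σ a < t then 1 else 0 := by
  simpa only [not_lt] using σ.sum_boole_and_not_apply (· < t)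

theorem Equiv.Perm.sum_boole_le_lt_apply {α : Type*} [Fintype α] [LinearOrder α]
    (σ : Equiv.Perm α) (t : α) :
    (∑ a, if a ≤ t ∧ t < σ a then 1 else 0 : ℕ) = ∑ a, if t < a ∧ σ a ≤ t then 1 else 0 := by
  simpa only [not_le] using σ.sum_boole_and_not_apply (· ≤ t)

namespace Paper

section
variable {n : ℕ}

theorem cnt_eq_sum (P : Fin n → Prop) [DecidablePred P] : cnt P = ∑ i, if P i then 1 else 0 := by
  rw [cnt, Nat.card_eq_fintype_card, Fintype.card_subtype, card_filter]

theorem trip_eq_sum (C : Fin n → Fin n → Fin n → Prop) [∀ i j l, Decidable (C i j l)] :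
    trip C = ∑ i, ∑ j, ∑ l, if i < j ∧ j < l ∧ C i j l then 1 else 0 := by
  rw [trip, Nat.card_eq_fintype_card, Fintype.card_subtype, card_filter]
  simp only [Fintype.sum_prod_type]

theorem quad_eq_sum (C : Fin n → Fin n → Fin n → Fin n → Prop)
    [∀ i j k l, Decidable (C i j k l)] :
    quad C = ∑ i, ∑ j, ∑ k, ∑ l, if i < j ∧ j < k ∧ k < l ∧ C i j k l then 1 else 0 := by
  rw [quad, Nat.card_eq_fintype_card, Fintype.card_subtype, card_filter]
  simp only [Fintype.sum_prod_type]

variable (σ : Equiv.Perm (Fin n))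

theorem inversions_eq_sum : inversions σ = ∑ a, ∑ b, if a < b ∧ σ b < σ a then 1 else 0 := by
  rw [inversions, Nat.card_eq_fintype_card, Fintype.card_subtype, card_filter]
  simp only [Fintype.sum_prod_type]

theorem ucross_eq_sum : ucross σ = ∑ a, ∑ b, if a < b ∧ b < σ a ∧ σ a < σ b then 1 else 0 := by
  rw [ucross, quad_eq_sum]
  refine sum_congr rfl fun a _ => sum_congr rfl fun b _ => ?_
  simp only [show ∀ k l, (a < b ∧ b < k ∧ k < l ∧ σ a = k ∧ σ b = l) ↔
    (l = σ b ∧ k = σ a ∧ a < b ∧ b < σ a ∧ σ a < σ b) by grind, ite_and, Fintype.sum_ite_eq']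

theorem unest_eq_sum : unest σ = ∑ a, ∑ b, if a < b ∧ b < σ b ∧ σ b < σ a then 1 else 0 := by
  rw [unest, quad_eq_sum]
  refine sum_congr rfl fun a _ => sum_congr rfl fun b _ => ?_
  simp only [show ∀ k l, (a < b ∧ b < k ∧ k < l ∧ σ a = l ∧ σ b = k) ↔
    (l = σ a ∧ k = σ b ∧ a < b ∧ b < σ b ∧ σ b < σ a) by grind, ite_and, Fintype.sum_ite_eq']

theorem lcross_eq_sum : lcross σ = ∑ a, ∑ b, if σ a < σ b ∧ σ b < a ∧ a < b then 1 else 0 := by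
  rw [lcross, quad_eq_sum, Fintype.sum_comm₄]
  refine sum_congr rfl fun a _ => sum_congr rfl fun b _ => ?_
  simp only [show ∀ i j, (i < j ∧ j < a ∧ a < b ∧ σ a = i ∧ σ b = j) ↔
    (j = σ b ∧ i = σ a ∧ σ a < σ b ∧ σ b < a ∧ a < b) by grind, ite_and, Fintype.sum_ite_eq']

theorem lnest_eq_sum : lnest σ = ∑ a, ∑ b, if σ b < σ a ∧ σ a < a ∧ a < b then 1 else 0 := by
  rw [lnest, quad_eq_sum, Fintype.sum_comm₄]
  refine sum_congr rfl fun a _ => sum_congr rfl fun b _ => ?_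
  simp only [show ∀ i j, (i < j ∧ j < a ∧ a < b ∧ σ b = i ∧ σ a = j) ↔
    (j = σ a ∧ i = σ b ∧ σ b < σ a ∧ σ a < a ∧ a < b) by grind, ite_and, Fintype.sum_ite_eq']

theorem ljoin_eq_sum : ljoin σ = ∑ a, ∑ b, if σ a < a ∧ a < b ∧ σ b = a then 1 else 0 := by
  rw [ljoin, trip_eq_sum, sum_comm]
  refine sum_congr rfl fun a _ => ?_
  rw [sum_comm]
  refine sum_congr rfl fun b _ => ?_
  simp only [show ∀ i, (i < a ∧ a < b ∧ σ a = i ∧ σ b = a) ↔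
    (i = σ a ∧ σ a < a ∧ a < b ∧ σ b = a) by grind, ite_and, Fintype.sum_ite_eq']

theorem upsnest_eq_sum : upsnest σ = ∑ a, ∑ b, if a < b ∧ b < σ a ∧ σ b = b then 1 else 0 := by
  rw [upsnest, trip_eq_sum]
  refine sum_congr rfl fun a _ => sum_congr rfl fun b _ => ?_
  simp only [show ∀ l, (a < b ∧ b < l ∧ σ b = b ∧ σ a = l) ↔
    (l = σ a ∧ a < b ∧ b < σ a ∧ σ b = b) by grind, ite_and, Fintype.sum_ite_eq']

theorem lpsnest_eq_sum : lpsnest σ = ∑ a, ∑ b, if σ b < a ∧ a < b ∧ σ a = a then 1 else 0 := by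
  rw [lpsnest, trip_eq_sum, sum_comm]
  refine sum_congr rfl fun a _ => ?_
  rw [sum_comm]
  refine sum_congr rfl fun b _ => ?_
  simp only [show ∀ i, (i < a ∧ a < b ∧ σ a = a ∧ σ b = i) ↔
    (i = σ b ∧ σ b < a ∧ a < b ∧ σ a = a) by grind, ite_and, Fintype.sum_ite_eq']

def mixedInversions : ℕ := ∑ a, ∑ b, if a < σ a ∧ σ b < b ∧ a < b ∧ σ b < σ a then 1 else 0

theorem inversions_eq_add_mixedInversions :
    inversions σ = unest σ + lnest σ + upsnest σ + lpsnest σ + mixedInversions σ := by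
  simp only [inversions_eq_sum, unest_eq_sum, lnest_eq_sum, upsnest_eq_sum, lpsnest_eq_sum,
    mixedInversions, ← sum_add_distrib]
  refine sum_congr rfl fun a _ => sum_congr rfl fun b _ => ?_
  split_ifs <;> omega

theorem mixedInversions_eq_add :
    mixedInversions σ = (∑ a, ∑ b, if a < σ a ∧ σ b ≤ a ∧ a < b then 1 else 0) +
      ∑ b, ∑ a, if σ b < b ∧ a < σ b ∧ σ b ≤ σ a then 1 else 0 := by
  rw [mixedInversions, sum_comm (f := fun b a => if σ b < b ∧ a < σ b ∧ σ b ≤ σ a then 1 else 0),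
    ← sum_add_distrib]
  refine sum_congr rfl fun a _ => ?_
  rw [← sum_add_distrib]
  refine sum_congr rfl fun b _ => ?_
  have := (σ.injective.eq_iff (a := a) (b := b)).symm
  split_ifs <;> omega

theorem exc_add_ucross_add_unest_eq_sum :
    exc σ + ucross σ + unest σ = ∑ a, ∑ b, if a < σ a ∧ σ b ≤ a ∧ a < b then 1 else 0 := by
  have hgap : ∀ a, (∑ b, if a < σ a ∧ σ b ≤ a ∧ a < b then 1 else 0 : ℕ) =
      ∑ b, if a < σ a ∧ b ≤ a ∧ a < σ b then 1 else 0 := by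
    intro a
    by_cases ha : a < σ a
    · simp only [ha, true_and]
      rw [σ.sum_boole_le_lt_apply a]
      simp only [and_comm]
    · simp only [ha, false_and, if_false]
  rw [sum_congr rfl fun a _ => hgap a, exc, cnt_eq_sum, ucross_eq_sum, unest_eq_sum, sum_comm,
    sum_comm (f := fun b a => if b < a ∧ a < σ a ∧ σ a < σ b then 1 else 0),
    ← sum_add_distrib, ← sum_add_distrib]
  refine sum_congr rfl fun a _ => ?_
  rw [← Fintype.sum_ite_eq' a fun b => if a < σ a then 1 else 0, ← sum_add_distrib,
    ← sum_add_distrib]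
  refine sum_congr rfl fun b _ => ?_
  have := (σ.injective.eq_iff (a := a) (b := b)).symm
  split_ifs <;> omega

theorem lcross_add_lnest_add_ljoin_eq_sum :
    lcross σ + lnest σ + ljoin σ = ∑ b, ∑ a, if σ b < b ∧ a < σ b ∧ σ b ≤ σ a then 1 else 0 := by
  have hgap : ∀ b, (∑ a, if σ b < b ∧ a < σ b ∧ σ b ≤ σ a then 1 else 0 : ℕ) =
      ∑ a, if σ b < b ∧ σ b ≤ a ∧ σ a < σ b then 1 else 0 := by
    intro b
    by_cases hb : σ b < b
    · simp only [hb, true_and]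
      exact σ.sum_boole_lt_le_apply (σ b)
    · simp only [hb, false_and, if_false]
  rw [sum_congr rfl fun b _ => hgap b, lcross_eq_sum, lnest_eq_sum, ljoin_eq_sum,
    sum_comm (f := fun a b => if σ a < σ b ∧ σ b < a ∧ a < b then 1 else 0),
    sum_comm (f := fun a b => if σ a < a ∧ a < b ∧ σ b = a then 1 else 0),
    ← sum_add_distrib, ← sum_add_distrib]
  refine sum_congr rfl fun b _ => ?_
  rw [← sum_add_distrib, ← sum_add_distrib]
  refine sum_congr rfl fun a _ => ?_
  have := (σ.injective.eq_iff (a := a) (b := b)).symm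
  split_ifs <;> omega

theorem upsnest_eq_lpsnest : upsnest σ = lpsnest σ := by
  rw [upsnest_eq_sum, lpsnest_eq_sum, sum_comm]
  refine sum_congr rfl fun j _ => ?_
  by_cases hj : σ j = j
  · simp only [hj, and_true]
    calc (∑ i, if i < j ∧ j < σ i then 1 else 0 : ℕ)
        = ∑ i, if i < j ∧ j ≤ σ i then 1 else 0 := by
          refine sum_congr rfl fun i _ => ?_
          have := (σ.injective.eq_iff (a := i) (b := j)).symm
          split_ifs <;> omega
      _ = ∑ l, if j ≤ l ∧ σ l < j then 1 else 0 := σ.sum_boole_lt_le_apply j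
      _ = ∑ l, if σ l < j ∧ j < l then 1 else 0 := by
          refine sum_congr rfl fun l _ => ?_
          have := (σ.injective.eq_iff (a := l) (b := j)).symm
          split_ifs <;> omega
  · simp only [hj, and_false, if_false, sum_const_zero]

theorem exc_eq_cnt_isCval_add_cnt_isCdrise : exc σ = cnt (isCval σ) + cnt (isCdrise σ) := by
  unfold isCval isCdrise
  simp only [exc, cnt_eq_sum, ← sum_add_distrib]
  refine sum_congr rfl fun i _ => ?_
  have : σ⁻¹ i = i ↔ σ i = i := Equiv.Perm.inv_eq_iff_eq.trans eq_comm
  split_ifs <;> omega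

theorem ljoin_eq_cnt_isCdfall : ljoin σ = cnt (isCdfall σ) := by
  unfold isCdfall
  rw [ljoin_eq_sum, cnt_eq_sum]
  refine sum_congr rfl fun a _ => ?_
  have key : ∀ b, (σ a < a ∧ a < b ∧ σ b = a) ↔ (b = σ⁻¹ a ∧ σ a < a ∧ a < σ⁻¹ a) := by
    intro b
    constructor
    · rintro ⟨h₁, h₂, rfl⟩
      simp [h₁, h₂]
    · rintro ⟨rfl, h₁, h₂⟩
      exact ⟨h₁, h₂, σ.apply_symm_apply a⟩
  simp only [key, ite_and, Fintype.sum_ite_eq']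

end

open Classical in
/-- Proposition 2.23 of Sokal–Zeng: the inversion number in
terms of cycle, crossing and nesting statistics. -/
theorem statement11 (n : ℕ) (σ : Equiv.Perm (Fin n)) :
    inversions σ =
        exc σ + (ucross σ + 2 * unest σ) +
          (lcross σ + ljoin σ + 2 * lnest σ + 2 * lpsnest σ) ∧
      inversions σ =
        cnt (isCval σ) + cnt (isCdrise σ) + cnt (isCdfall σ) + ucross σ + lcross σ +
          2 * (unest σ + lnest σ + psnest σ) := by
  have hinv := inversions_eq_add_mixedInversions σ
  have hmixed := mixedInversions_eq_add σ
  have hexc := exc_add_ucross_add_unest_eq_sum σ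
  have hlow := lcross_add_lnest_add_ljoin_eq_sum σ
  have hps := upsnest_eq_lpsnest σ
  have hval := exc_eq_cnt_isCval_add_cnt_isCdrise σ
  have hfall := ljoin_eq_cnt_isCdfall σ
  rw [psnest]
  constructor <;> omega

end Paper
end

section
/- For every permutation σ of [n]: #{(i,j) : i ≤ j < σ(i) and σ(j) > j} = #{(i,j) : σ(i) < σ(j) ≤ i and σ(j) > j}, and #{(i,j) : i ≤ j < σ(i) and σ(j) ≤ j} = #{(i,j) : σ(i) < σ(j) ≤ i and σ(j) ≤ j}. -/
/-!
View `σ` as the arcs `i ↦ σ i`. A permutation crosses every cut `t` as often upwards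
(`i < t ≤ σ i`) as downwards (`σ i < t ≤ i`); cutting at `t = σ j` turns the right-hand
conditions `σ i < σ j ≤ i` into `i < σ j ≤ σ i`, so that both sides count pairs of upward arcs.
For an excedance `j`, the pairs with `σ j ≤ σ i` agree on both sides, and the remaining ones are
the crossings `i < j < σ i < σ j` on the left and `j < i < σ j < σ i` on the right, exchanged by
swapping `i` and `j`. Without the condition on `j`, for each `i` the two sides count the
intervals `[i, σ i)` and (reindexing `j` by `σ`) `(i, σ i]`, which have the same size, so the
identity for non-excedances follows by subtraction.
-/

open Finset

namespace Finset

variable {α β : Type*} [Fintype α] [Fintype β]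

theorem card_filter_prod_eq_sum_snd (P : α × β → Prop) [DecidablePred P] :
    #{q | P q} = ∑ b, #{a | P (a, b)} := by
  simp only [card_filter, Fintype.sum_prod_type]
  exact sum_comm

theorem card_filter_prod_eq_sum_fst (P : α × β → Prop) [DecidablePred P] :
    #{q | P q} = ∑ a, #{b | P (a, b)} := by
  simp only [card_filter, Fintype.sum_prod_type]

end Finset

namespace Equiv.Perm

variable {α : Type*} [Fintype α]

theorem card_filter_and_not_apply (σ : Perm α) (p : α → Prop) [DecidablePred p] :
    #{i | p i ∧ ¬p (σ i)} = #{i | ¬p i ∧ p (σ i)} := by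
  classical
  have hσ : #{i | p i} = #{i | p (σ i)} := card_equiv σ.symm (by simp)
  simpa only [← filter_and_not, and_comm (a := ¬p _)] using card_sdiff_comm hσ

variable [LinearOrder α] (σ : Perm α)

theorem card_filter_apply_lt_le_eq (t : α) :
    #{i | σ i < t ∧ t ≤ i} = #{i | i < t ∧ t ≤ σ i} := by
  simpa only [not_lt, and_comm] using (card_filter_and_not_apply σ (· < t)).symm

theorem card_pairs_apply_lt_le_eq (C : α → Prop) :
    Nat.card {q : α × α // σ q.1 < σ q.2 ∧ σ q.2 ≤ q.1 ∧ C q.2} =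
      Nat.card {q : α × α // q.1 < σ q.2 ∧ σ q.2 ≤ σ q.1 ∧ C q.2} := by
  classical
  simp only [Nat.card_eq_fintype_card, Fintype.card_subtype]
  rw [card_filter_prod_eq_sum_snd, card_filter_prod_eq_sum_snd]
  refine sum_congr rfl fun j _ => ?_
  by_cases hC : C j
  · simpa only [hC, and_true] using card_filter_apply_lt_le_eq σ (σ j)
  · simp only [hC, and_false]

theorem card_pairs_le_lt_apply_eq [LocallyFiniteOrder α] :
    Nat.card {q : α × α // q.1 ≤ q.2 ∧ q.2 < σ q.1} =
      Nat.card {q : α × α // q.1 < σ q.2 ∧ σ q.2 ≤ σ q.1} := by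
  simp only [Nat.card_eq_fintype_card, Fintype.card_subtype]
  rw [card_filter_prod_eq_sum_fst, card_filter_prod_eq_sum_fst]
  refine sum_congr rfl fun i _ => ?_
  calc #{j | i ≤ j ∧ j < σ i} = #(Ico i (σ i)) := by congr 1; ext; simp
    _ = #(Ioc i (σ i)) := by rw [card_Ico_eq_card_Icc_sub_one, card_Ioc_eq_card_Icc_sub_one]
    _ = #{j | i < σ j ∧ σ j ≤ σ i} := card_equiv σ.symm (by simp)

theorem card_pairs_le_lt_apply_and_lt_apply_eq :
    Nat.card {q : α × α // q.1 ≤ q.2 ∧ q.2 < σ q.1 ∧ q.2 < σ q.2} =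
      Nat.card {q : α × α // q.1 < σ q.2 ∧ σ q.2 ≤ σ q.1 ∧ q.2 < σ q.2} := by
  simp only [Nat.card_eq_fintype_card, Fintype.card_subtype]
  have hcrossing : #{q : α × α | q.1 < q.2 ∧ q.2 < σ q.1 ∧ σ q.1 < σ q.2} =
      #{q : α × α | q.2 < q.1 ∧ q.1 < σ q.2 ∧ σ q.2 < σ q.1} :=
    card_equiv (Equiv.prodComm α α) (by simp)
  rw [← card_filter_add_card_filter_not (s := {q : α × α | _}) (fun q => σ q.2 ≤ σ q.1),
    ← card_filter_add_card_filter_not (s := {q : α × α | q.1 < σ q.2 ∧ _}) (fun q => q.1 ≤ q.2)]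
  simp only [filter_filter]
  congr 1
  · congr 1
    ext q
    simp only [mem_filter, mem_univ, true_and]
    grind
  · convert hcrossing using 2 <;> ext q <;> simp only [mem_filter, mem_univ, true_and] <;>
      grind [σ.injective.eq_iff]

theorem card_pairs_le_lt_apply_and_apply_le_eq [LocallyFiniteOrder α] :
    Nat.card {q : α × α // q.1 ≤ q.2 ∧ q.2 < σ q.1 ∧ σ q.2 ≤ q.2} =
      Nat.card {q : α × α // q.1 < σ q.2 ∧ σ q.2 ≤ σ q.1 ∧ σ q.2 ≤ q.2} := by
  have hexc := σ.card_pairs_le_lt_apply_and_lt_apply_eq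
  have htotal := σ.card_pairs_le_lt_apply_eq
  simp only [Nat.card_eq_fintype_card, Fintype.card_subtype] at hexc htotal ⊢
  have hleft := card_filter_add_card_filter_not
    (s := {q : α × α | q.1 ≤ q.2 ∧ q.2 < σ q.1}) (fun q => q.2 < σ q.2)
  have hright := card_filter_add_card_filter_not
    (s := {q : α × α | q.1 < σ q.2 ∧ σ q.2 ≤ σ q.1}) (fun q => q.2 < σ q.2)
  simp only [filter_filter, and_assoc, not_lt] at hleft hright
  omega

end Equiv.Perm

namespace Paper

open Classical in
/-- Lemma 2.24 of Sokal–Zeng, after Clarke. -/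
theorem statement12 (n : ℕ) (σ : Equiv.Perm (Fin n)) :
    (Nat.card {p : Fin n × Fin n // p.1 ≤ p.2 ∧ p.2 < σ p.1 ∧ p.2 < σ p.2} =
        Nat.card {p : Fin n × Fin n // σ p.1 < σ p.2 ∧ σ p.2 ≤ p.1 ∧ p.2 < σ p.2}) ∧
      Nat.card {p : Fin n × Fin n // p.1 ≤ p.2 ∧ p.2 < σ p.1 ∧ σ p.2 ≤ p.2} =
        Nat.card {p : Fin n × Fin n // σ p.1 < σ p.2 ∧ σ p.2 ≤ p.1 ∧ σ p.2 ≤ p.2} := by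
  exact ⟨σ.card_pairs_le_lt_apply_and_lt_apply_eq.trans
      (σ.card_pairs_apply_lt_le_eq fun j => j < σ j).symm,
    σ.card_pairs_le_lt_apply_and_apply_le_eq.trans
      (σ.card_pairs_apply_lt_le_eq fun j => σ j ≤ j).symm⟩

end Paper
end

section
/- S-fraction for set partitions: for each n ≥ 0 let B_n(x,y,v) = ∑_{π∈Π_n} x^{|π|} y^{erec(π)} v^{n−|π|−erec(π)} (the exponent n−|π|−erec(π) is nonnegative for every π). Then ∑_{n≥0} B_n(x,y,v) t^n is given by the S-type continued fraction with coefficients α_{2k−1} = x and α_{2k} = y+(k−1)v for k ≥ 1. -/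
/-!
Build the partition by inserting `0, 1, …, n - 1` in turn, remembering which blocks are still
*open*, i.e. will receive a later element. An arc `(j, l)` joining consecutive elements of a block
starts at an exclusive record iff no arc `(a, b)` has `a < j < l < b`; this is decided as soon as
`l` is inserted, because a later covering arc must leave an open block lying entirely left of `j`.

The next element `γ` either starts a new block, open or not (weight `x`), or joins one of the `h`
open blocks `B`, which then stays open or not. The new arc `(max B, γ)` is covered iff another
open block lies left of `max B`, which fails only for the open block with the smallest maximum:
joining contributes `y + (h - 1) v`. Hence the weighted number of states after `m` insertions with
`h` open blocks obeys the recurrence of `x ^ h` times the weighted number of nonnegative paths of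
length `2 m` ending at height `2 h`, one insertion accounting for two steps.
-/

namespace Paper

section LatticePaths

open Finset

variable {R : Type*} [CommRing R]

open Classical in
noncomputable def nonnegPaths (ℓ : ℕ) (k : ℤ) : Finset (Fin ℓ → MStep) :=
  univ.filter fun ω => (∀ i ∈ range (ℓ + 1), 0 ≤ height ω i) ∧ height ω ℓ = k

noncomputable def pathSum (α : ℕ → R) (ℓ : ℕ) (k : ℤ) : R :=
  ∑ ω ∈ nonnegPaths ℓ k, sweight α ω

lemma mem_nonnegPaths {ℓ : ℕ} {k : ℤ} {ω : Fin ℓ → MStep} :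
    ω ∈ nonnegPaths ℓ k ↔ (∀ i ∈ range (ℓ + 1), 0 ≤ height ω i) ∧ height ω ℓ = k := by
  simp [nonnegPaths]

lemma MStep.sum_univ {M : Type*} [AddCommMonoid M] (g : MStep → M) :
    ∑ s, g s = g .up + g .down + g .flat := by
  rw [show (univ : Finset MStep) = {.up, .down, .flat} from rfl, sum_insert (by decide),
    sum_insert (by decide), sum_singleton, add_assoc]

lemma height_of_length_zero (ω : Fin 0 → MStep) (i : ℕ) : height ω i = 0 := by
  simp [height]

lemma height_snoc_of_le {ℓ : ℕ} (ω : Fin ℓ → MStep) (s : MStep) {i : ℕ} (hi : i ≤ ℓ) :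
    height (Fin.snoc ω s) i = height ω i := by
  simp only [height, sum_filter, Fin.sum_univ_castSucc, Fin.snoc_castSucc, Fin.val_castSucc,
    Fin.val_last, Nat.not_lt.mpr hi, if_false, add_zero]

lemma height_snoc_length {ℓ : ℕ} (ω : Fin ℓ → MStep) (s : MStep) :
    height (Fin.snoc ω s) (ℓ + 1) = height ω ℓ + s.val := by
  simp [height, sum_filter, Fin.sum_univ_castSucc]

lemma sweight_snoc {ℓ : ℕ} (α : ℕ → R) (ω : Fin ℓ → MStep) (s : MStep) :
    sweight α (Fin.snoc ω s) =
      sweight α ω * match s with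
        | .up => 1
        | .down => α (height ω ℓ).toNat
        | .flat => 0 := by
  rw [sweight, sweight, Fin.prod_univ_castSucc]
  congr 1
  · refine prod_congr rfl fun j _ => ?_
    rw [Fin.snoc_castSucc, Fin.val_castSucc, height_snoc_of_le ω s j.is_lt.le]
  · cases s <;> simp [height_snoc_of_le ω _ le_rfl]

lemma snoc_mem_nonnegPaths_iff {ℓ : ℕ} {k : ℤ} (hk : 0 ≤ k) (ω : Fin ℓ → MStep) (s : MStep) :
    Fin.snoc ω s ∈ nonnegPaths (ℓ + 1) k ↔ ω ∈ nonnegPaths ℓ (k - s.val) := by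
  simp only [mem_nonnegPaths, mem_range, height_snoc_length]
  constructor
  · rintro ⟨hnonneg, hend⟩
    refine ⟨fun i hi => ?_, by omega⟩
    simpa [height_snoc_of_le ω s (by omega : i ≤ ℓ)] using hnonneg i (by omega)
  · rintro ⟨hnonneg, hend⟩
    refine ⟨fun i hi => ?_, by omega⟩
    rcases Nat.lt_succ_iff_lt_or_eq.mp hi with hi | rfl
    · rw [height_snoc_of_le ω s (by omega)]
      exact hnonneg i hi
    · rw [height_snoc_length]
      omega

lemma pathSum_zero (α : ℕ → R) (k : ℤ) : pathSum α 0 k = if k = 0 then 1 else 0 := by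
  have hpaths : nonnegPaths 0 k = if k = 0 then {Fin.elim0} else ∅ := by
    ext ω
    split_ifs with hk <;>
      simp [mem_nonnegPaths, height_of_length_zero, Subsingleton.elim ω Fin.elim0, eq_comm, hk]
  rw [pathSum, hpaths]
  split_ifs <;> simp [sweight]

lemma pathSum_of_neg (α : ℕ → R) (ℓ : ℕ) {k : ℤ} (hk : k < 0) : pathSum α ℓ k = 0 := by
  refine sum_eq_zero fun ω hω => ?_
  obtain ⟨hnonneg, hend⟩ := mem_nonnegPaths.mp hω
  have := hnonneg ℓ (self_mem_range_succ ℓ)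
  omega

/-- Level steps have S-weight zero, so only paths ending with a rise or a fall contribute. -/
lemma pathSum_succ (α : ℕ → R) (ℓ : ℕ) {k : ℤ} (hk : 0 ≤ k) :
    pathSum α (ℓ + 1) k = pathSum α ℓ (k - 1) + α (k + 1).toNat * pathSum α ℓ (k + 1) := by
  classical
  have hsplit : pathSum α (ℓ + 1) k =
      ∑ s, ∑ ω ∈ nonnegPaths ℓ (k - s.val), sweight α (Fin.snoc ω s) := by
    rw [pathSum, ← univ_inter (nonnegPaths _ _), ← sum_ite_mem,
      ← (Fin.snocEquiv fun _ => MStep).sum_comp, Fintype.sum_prod_type]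
    refine sum_congr rfl fun s _ => ?_
    dsimp only [Fin.snocEquiv, Equiv.coe_fn_mk]
    simp only [snoc_mem_nonnegPaths_iff hk, sum_ite_mem, univ_inter]
  rw [hsplit, MStep.sum_univ, pathSum, pathSum, mul_sum]
  simp only [sweight_snoc, mul_one, mul_zero, sum_const_zero, add_zero]
  congr 1
  refine sum_congr (by simp [MStep.val]) fun ω hω => ?_
  rw [(mem_nonnegPaths.mp hω).2, mul_comm]

lemma sum_dyckPaths_sweight (α : ℕ → R) (ℓ : ℕ) :
    ∑ ω ∈ dyckPaths ℓ, sweight α ω = pathSum α ℓ 0 := by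
  refine sum_subset (fun ω hω => ?_) fun ω hω hnotDyck => ?_
  · simpa [dyckPaths, motzkinPaths, mem_nonnegPaths] using (mem_filter.mp hω).1
  · obtain ⟨i, hi⟩ : ∃ i, ω i = .flat := by
      by_contra! hflat
      exact hnotDyck (mem_filter.mpr ⟨by simpa [motzkinPaths, mem_nonnegPaths] using hω, hflat⟩)
    exact prod_eq_zero (mem_univ i) (by rw [hi])

lemma pathSum_add_two_zero (α : ℕ → R) (ℓ : ℕ) :
    pathSum α (ℓ + 2) 0 = α 1 * (pathSum α ℓ 0 + α 2 * pathSum α ℓ 2) := by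
  rw [pathSum_succ α (ℓ + 1) le_rfl, pathSum_of_neg α _ (by norm_num),
    pathSum_succ α ℓ (by norm_num : (0 : ℤ) ≤ 0 + 1)]
  norm_num
  rfl

lemma pathSum_add_two (α : ℕ → R) (ℓ k : ℕ) :
    pathSum α (ℓ + 2) ((k : ℤ) + 1) =
      pathSum α ℓ ((k : ℤ) - 1) + (α (k + 1) + α (k + 2)) * pathSum α ℓ ((k : ℤ) + 1) +
        α (k + 2) * α (k + 3) * pathSum α ℓ ((k : ℤ) + 3) := by
  rw [pathSum_succ α (ℓ + 1) (by omega), pathSum_succ α ℓ (by omega : (0 : ℤ) ≤ k + 1 - 1),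
    pathSum_succ α ℓ (by omega : (0 : ℤ) ≤ k + 1 + 1),
    show ((k : ℤ) + 1 - 1 + 1).toNat = k + 1 by omega,
    show ((k : ℤ) + 1 + 1).toNat = k + 2 by omega,
    show ((k : ℤ) + 1 + 1 + 1).toNat = k + 3 by omega]
  ring_nf

end LatticePaths

section Arcs

open Finset

variable {n : ℕ}

lemma insert_ne_singleton_of_notMem {α : Type*} [DecidableEq α] {a : α} {s : Finset α}
    (hs : s.Nonempty) (ha : a ∉ s) : insert a s ≠ {a} := fun h => by
  obtain ⟨b, hb⟩ := hs
  have hba : b ∈ ({a} : Finset α) := h ▸ mem_insert_of_mem hb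
  exact ha (mem_singleton.mp hba ▸ hb)

def BlocksDisjoint (Q : Finset (Finset (Fin n))) : Prop :=
  ∀ B ∈ Q, ∀ C ∈ Q, ∀ i, i ∈ B → i ∈ C → B = C

lemma BlocksDisjoint.mono {Q Q' : Finset (Finset (Fin n))} (hQ : BlocksDisjoint Q)
    (h : Q' ⊆ Q) : BlocksDisjoint Q' :=
  fun B hB C hC => hQ B (h hB) C (h hC)

lemma BlocksDisjoint.insert {Q : Finset (Finset (Fin n))} {B : Finset (Fin n)}
    (hQ : BlocksDisjoint Q) (hB : ∀ C ∈ Q, ∀ i ∈ B, i ∉ C) : BlocksDisjoint (insert B Q) := by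
  intro C hC D hD i hiC hiD
  rcases mem_insert.mp hC with rfl | hCQ <;> rcases mem_insert.mp hD with rfl | hDQ
  · rfl
  · exact absurd hiD (hB D hDQ i hiC)
  · exact absurd hiC (hB C hCQ i hiD)
  · exact hQ C hCQ D hDQ i hiC hiD

lemma arc_right_unique {Q : Finset (Finset (Fin n))} (hQ : BlocksDisjoint Q) {i l l' : Fin n}
    (h : arc Q i l) (h' : arc Q i l') : l = l' := by
  obtain ⟨hil, B, hB, hiB, hlB, hB_gap⟩ := h
  obtain ⟨hil', C, hC, hiC, hlC, hC_gap⟩ := h'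
  obtain rfl := hQ B hB C hC i hiB hiC
  by_contra hne
  rcases lt_or_gt_of_ne hne with hlt | hlt
  · exact hC_gap l hlB ⟨hil, hlt⟩
  · exact hB_gap l' hlC ⟨hil', hlt⟩

lemma arc_left_unique {Q : Finset (Finset (Fin n))} (hQ : BlocksDisjoint Q) {i j l : Fin n}
    (h : arc Q i l) (h' : arc Q j l) : i = j := by
  obtain ⟨hil, B, hB, hiB, hlB, hB_gap⟩ := h
  obtain ⟨hjl, C, hC, hjC, hlC, hC_gap⟩ := h'
  obtain rfl := hQ B hB C hC l hlB hlC
  by_contra hne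
  rcases lt_or_gt_of_ne hne with hlt | hlt
  · exact hB_gap j hjC ⟨hlt, hjl⟩
  · exact hC_gap i hiB ⟨hlt, hil⟩

lemma exists_arc_of_lt {Q : Finset (Finset (Fin n))} {B : Finset (Fin n)} (hB : B ∈ Q)
    {i j : Fin n} (hiB : i ∈ B) (hjB : j ∈ B) (hij : i < j) : ∃ l, arc Q i l := by
  have hne : (B.filter (i < ·)).Nonempty := ⟨j, mem_filter.mpr ⟨hjB, hij⟩⟩
  obtain ⟨hlB, hil⟩ := mem_filter.mp ((B.filter (i < ·)).min'_mem hne)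
  exact ⟨_, hil, B, hB, hiB, hlB, fun k hkB ⟨hik, hkl⟩ =>
    not_lt.mpr ((B.filter (i < ·)).min'_le k (mem_filter.mpr ⟨hkB, hik⟩)) hkl⟩

lemma not_arc_of_forall_le {Q : Finset (Finset (Fin n))} (hQ : BlocksDisjoint Q)
    {B : Finset (Fin n)} (hB : B ∈ Q) {t : Fin n} (htB : t ∈ B) (htmax : ∀ j ∈ B, j ≤ t)
    (l : Fin n) : ¬ arc Q t l := by
  rintro ⟨htl, C, hC, htC, hlC, -⟩
  obtain rfl := hQ C hC B hB t htC htB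
  exact not_lt.mpr (htmax l hlC) htl

lemma cnt_eq_card_filter (P : Fin n → Prop) [DecidablePred P] : cnt P = #{i | P i} := by
  rw [cnt, Nat.card_eq_fintype_card, Fintype.card_subtype]

/-- In a partition of `Fin n`, the elements without an outgoing arc are the block maxima. -/
lemma cnt_not_exists_arc {Q : Finset (Finset (Fin n))} (hne : ∀ B ∈ Q, B.Nonempty)
    (hcover : ∀ i : Fin n, ∃ B ∈ Q, i ∈ B) (hQ : BlocksDisjoint Q) :
    cnt (fun i => ¬ ∃ l, arc Q i l) = Q.card := by
  classical
  rw [cnt_eq_card_filter]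
  symm
  refine card_bij (fun B hB => B.max' (hne B hB)) (fun B hB => ?_) (fun B hB C hC hBC => ?_)
    fun i hi => ?_
  · simpa using not_arc_of_forall_le hQ hB (B.max'_mem _) (fun j hj => B.le_max' j hj)
  · exact hQ B hB C hC _ (B.max'_mem _) (hBC ▸ C.max'_mem _)
  · obtain ⟨B, hB, hiB⟩ := hcover i
    refine ⟨B, hB, le_antisymm (B.max'_le _ _ fun j hjB => ?_) (B.le_max' i hiB)⟩
    by_contra! hij
    exact (mem_filter.mp hi).2 (exists_arc_of_lt hB hiB hjB hij)

lemma cnt_add_cnt_not (P : Fin n → Prop) : cnt P + cnt (fun i => ¬ P i) = n := by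
  classical
  rw [cnt_eq_card_filter, cnt_eq_card_filter, card_filter_add_card_filter_not, card_univ,
    Fintype.card_fin]

lemma le_bmax {B : Finset (Fin n)} {i : Fin n} (hi : i ∈ B) : (i : ℕ) ≤ bmax B :=
  le_sup (f := fun i : Fin n => (i : ℕ)) hi

lemma exists_mem_val_eq_bmax {B : Finset (Fin n)} (hB : B.Nonempty) : ∃ u ∈ B, (u : ℕ) = bmax B :=
  (exists_mem_eq_sup B hB _).imp fun _ ⟨huB, hu⟩ => ⟨huB, hu.symm⟩

noncomputable def arcCount (Q : Finset (Finset (Fin n))) (P : Fin n → Fin n → Prop) : ℕ :=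
  cnt fun i => ∃ l, arc Q i l ∧ P i l

lemma arcCount_add_arcCount_not {Q : Finset (Finset (Fin n))} (hQ : BlocksDisjoint Q)
    (P : Fin n → Fin n → Prop) :
    arcCount Q (fun i l => ¬ P i l) + arcCount Q P = cnt fun i => ∃ l, arc Q i l := by
  classical
  rw [add_comm, arcCount, arcCount, cnt_eq_card_filter, cnt_eq_card_filter, cnt_eq_card_filter,
    ← card_union_of_disjoint]
  · congr 1
    ext i
    simp only [mem_union, mem_filter, mem_univ, true_and]
    constructor
    · rintro (⟨l, hl, -⟩ | ⟨l, hl, -⟩) <;> exact ⟨l, hl⟩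
    · rintro ⟨l, hl⟩
      by_cases hP : P i l
      exacts [Or.inl ⟨l, hl, hP⟩, Or.inr ⟨l, hl, hP⟩]
  · refine disjoint_filter.mpr fun i _ ⟨l, hl, hP⟩ ⟨l', hl', hnP⟩ => hnP ?_
    rwa [← arc_right_unique hQ hl hl']

lemma arcCount_congr {Q Q' : Finset (Finset (Fin n))} {P P' : Fin n → Fin n → Prop}
    (harc : ∀ i l, arc Q' i l ↔ arc Q i l) (hP : ∀ i l, arc Q i l → (P' i l ↔ P i l)) :
    arcCount Q' P' = arcCount Q P := by
  unfold arcCount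
  congr 1
  ext i
  refine exists_congr fun l => ?_
  rw [harc]
  exact and_congr_right (hP i l)

lemma arcCount_of_arc_iff {Q Q' : Finset (Finset (Fin n))} {P P' : Fin n → Fin n → Prop}
    {t u : Fin n} [Decidable (P' t u)] (harc : ∀ i l, arc Q' i l ↔ arc Q i l ∨ (i = t ∧ l = u))
    (ht : ∀ l, ¬ arc Q t l) (hP : ∀ i l, arc Q i l → (P' i l ↔ P i l)) :
    arcCount Q' P' = arcCount Q P + if P' t u then 1 else 0 := by
  classical
  have hmem : ∀ i, (∃ l, arc Q' i l ∧ P' i l) ↔ (∃ l, arc Q i l ∧ P i l) ∨ (i = t ∧ P' t u) := by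
    intro i
    simp only [harc]
    constructor
    · rintro ⟨l, hl | ⟨rfl, rfl⟩, hP'⟩
      exacts [Or.inl ⟨l, hl, (hP i l hl).mp hP'⟩, Or.inr ⟨rfl, hP'⟩]
    · rintro (⟨l, hl, hPl⟩ | ⟨rfl, hP'⟩)
      exacts [⟨l, Or.inl hl, (hP i l hl).mpr hPl⟩, ⟨u, Or.inr ⟨rfl, rfl⟩, hP'⟩]
  have ht_notMem : t ∉ ({i | ∃ l, arc Q i l ∧ P i l} : Finset (Fin n)) := by
    simpa using fun l hl _ => ht l hl
  rw [arcCount, arcCount, cnt_eq_card_filter, cnt_eq_card_filter]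
  split_ifs with htu
  · rw [← card_insert_of_notMem ht_notMem]
    congr 1
    ext i
    simp [hmem, htu, or_comm]
  · rw [add_zero]
    congr 1
    ext i
    simp [hmem, htu]

end Arcs

section PartialPartitions

open Finset

/-- The blocks built from an initial segment of `Fin n`, together with the subset of *open*
blocks, those that are still to receive larger elements. -/
abbrev PartialState (n : ℕ) := Finset (Finset (Fin n)) × Finset (Finset (Fin n))

variable {n m : ℕ} {γ : Fin n} {p : PartialState n} {B : Finset (Fin n)} {R : Type*} [CommRing R]

structure IsPartialPartition (m : ℕ) (p : PartialState n) : Prop where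
  nonempty : ∀ B ∈ p.1, B.Nonempty
  val_lt : ∀ B ∈ p.1, ∀ i ∈ B, (i : ℕ) < m
  exists_mem : ∀ i : Fin n, (i : ℕ) < m → ∃ B ∈ p.1, i ∈ B
  disjoint : BlocksDisjoint p.1
  open_subset : p.2 ⊆ p.1

/-- The arc `(j, l)` lies below another arc of every completion of `p`: below an arc `(a, b)`
already present, or below the future arc leaving an open block that lies entirely left of `j`.
Uncovered arcs start at exclusive records. -/
def Covered (p : PartialState n) (j l : Fin n) : Prop :=
  (∃ a b, arc p.1 a b ∧ a < j ∧ l < b) ∨ ∃ C ∈ p.2, ∀ i ∈ C, i < j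

noncomputable def partialWeight (x y v : R) (p : PartialState n) : R :=
  x ^ p.1.card * y ^ arcCount p.1 (fun j l => ¬ Covered p j l) * v ^ arcCount p.1 (Covered p)

open Classical in
noncomputable def partialStates (n m h : ℕ) : Finset (PartialState n) :=
  univ.filter fun p => IsPartialPartition m p ∧ p.2.card = h

noncomputable def partialSum (x y v : R) (n m h : ℕ) : R :=
  ∑ p ∈ partialStates n m h, partialWeight x y v p

lemma mem_partialStates {h : ℕ} :
    p ∈ partialStates n m h ↔ IsPartialPartition m p ∧ p.2.card = h := by
  simp [partialStates]

lemma IsPartialPartition.eq_empty (hp : IsPartialPartition 0 p) : p = (∅, ∅) := by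
  have hblocks : p.1 = ∅ := eq_empty_of_forall_notMem fun B hB => by
    obtain ⟨i, hi⟩ := hp.nonempty B hB
    exact Nat.not_lt_zero _ (hp.val_lt B hB i hi)
  exact Prod.ext hblocks (subset_empty.mp (hblocks ▸ hp.open_subset))

lemma isPartialPartition_empty : IsPartialPartition 0 ((∅, ∅) : PartialState n) :=
  ⟨by simp, by simp, fun _ hi => absurd hi (Nat.not_lt_zero _), by simp [BlocksDisjoint],
    subset_rfl⟩

lemma partialSum_zero (x y v : R) (h : ℕ) :
    partialSum x y v n 0 h = if h = 0 then 1 else 0 := by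
  have hstates : partialStates n 0 h = if h = 0 then {(∅, ∅)} else ∅ := by
    ext p
    rw [mem_partialStates]
    constructor
    · rintro ⟨hp, rfl⟩
      obtain rfl := hp.eq_empty
      simp
    · split_ifs with hh
      · rintro hp
        rw [mem_singleton.mp hp, hh]
        exact ⟨isPartialPartition_empty, card_empty⟩
      · simp
  rw [partialSum, hstates]
  split_ifs
  · simp [partialWeight, arcCount, cnt, arc]
  · rfl

lemma isERecP_iff {Q : Finset (Finset (Fin n))} (hQ : BlocksDisjoint Q) (i : Fin n) :
    isERecP Q i ↔ ∃ l, arc Q i l ∧ ¬ Covered (Q, ∅) i l := by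
  refine exists_congr fun l => and_congr_right fun hil => ⟨?_, ?_⟩
  · rintro hrec (⟨a, b, hab, hai, hlb⟩ | ⟨C, hC, -⟩)
    · exact not_lt.mpr hlb.le (hrec a hai b hab)
    · exact absurd hC (notMem_empty C)
  · intro hnc j hji b hjb
    by_contra! hlb
    rcases hlb.eq_or_lt with rfl | hlb
    · exact hji.ne' (arc_left_unique hQ hil hjb)
    · exact hnc (Or.inl ⟨j, b, hjb, hji, hlb⟩)

lemma partialWeight_of_mem_setPartitions (x y v : R) {P : Finset (Finset (Fin n))}
    (hP : P ∈ setPartitions n) :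
    partialWeight x y v (P, ∅) = x ^ P.card * y ^ perecP P * v ^ (n - P.card - perecP P) := by
  obtain ⟨hne, hcover, hdisj⟩ : (∀ B ∈ P, B.Nonempty) ∧ (∀ i : Fin n, ∃ B ∈ P, i ∈ B) ∧
      BlocksDisjoint P := by
    simpa [setPartitions, BlocksDisjoint] using hP
  have herec : perecP P = arcCount P fun j l => ¬ Covered (P, ∅) j l := by
    rw [perecP, arcCount]
    exact congrArg cnt (funext fun i => propext (isERecP_iff hdisj i))
  have htotal := arcCount_add_arcCount_not hdisj (Covered (P, ∅))
  have hcount := cnt_add_cnt_not fun i => ∃ l, arc P i l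
  rw [cnt_not_exists_arc hne hcover hdisj] at hcount
  rw [partialWeight, herec]
  dsimp only
  congr 2
  omega

lemma isPartialPartition_length_iff {Q : Finset (Finset (Fin n))} :
    IsPartialPartition n (Q, ∅) ↔ Q ∈ setPartitions n := by
  simp only [setPartitions, mem_filter, mem_univ, true_and]
  exact ⟨fun hp => ⟨hp.nonempty, fun i => hp.exists_mem i i.isLt, hp.disjoint⟩,
    fun ⟨hne, hcover, hdisj⟩ => ⟨hne, fun _ _ i _ => i.isLt, fun i _ => hcover i, hdisj,
      empty_subset Q⟩⟩

lemma partialSum_length (x y v : R) :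
    partialSum x y v n n 0 =
      ∑ P ∈ setPartitions n, x ^ P.card * y ^ perecP P * v ^ (n - P.card - perecP P) := by
  have hstates : partialStates n n 0 =
      (setPartitions n).map ⟨fun P => (P, ∅), fun _ _ h => congrArg Prod.fst h⟩ := by
    ext ⟨Q, O⟩
    simp only [mem_partialStates, card_eq_zero, mem_map]
    constructor
    · rintro ⟨hp, rfl⟩
      exact ⟨Q, isPartialPartition_length_iff.mp hp, rfl⟩
    · rintro ⟨P, hP, hPQ⟩
      obtain ⟨rfl, rfl⟩ := Prod.mk.inj hPQ
      exact ⟨isPartialPartition_length_iff.mpr hP, rfl⟩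
  rw [partialSum, hstates, sum_map]
  exact sum_congr rfl fun P hP => partialWeight_of_mem_setPartitions x y v hP

lemma IsPartialPartition.notMem (hp : IsPartialPartition m p) (hγ : (γ : ℕ) = m)
    (hB : B ∈ p.1) : γ ∉ B :=
  fun hγB => (hp.val_lt B hB γ hγB).ne hγ

lemma IsPartialPartition.lt_of_arc (hp : IsPartialPartition m p) {i l : Fin n}
    (h : arc p.1 i l) : (i : ℕ) < m ∧ (l : ℕ) < m := by
  obtain ⟨-, B, hB, hiB, hlB, -⟩ := h
  exact ⟨hp.val_lt B hB i hiB, hp.val_lt B hB l hlB⟩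

def blockOf (Q : Finset (Finset (Fin n))) (i : Fin n) : Finset (Fin n) :=
  (Q.filter (i ∈ ·)).sup id

lemma blockOf_eq {Q : Finset (Finset (Fin n))} (hQ : BlocksDisjoint Q) {B : Finset (Fin n)}
    (hB : B ∈ Q) {i : Fin n} (hiB : i ∈ B) : blockOf Q i = B :=
  le_antisymm
    (Finset.sup_le fun C hC => (hQ C (mem_filter.mp hC).1 B hB i (mem_filter.mp hC).2 hiB).le)
    (le_sup (f := id) (mem_filter.mpr ⟨hB, hiB⟩))

lemma IsPartialPartition.blockOf_mem (hp : IsPartialPartition (m + 1) p) (hγ : (γ : ℕ) = m) :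
    blockOf p.1 γ ∈ p.1 ∧ γ ∈ blockOf p.1 γ := by
  obtain ⟨B, hB, hγB⟩ := hp.exists_mem γ (by omega)
  rw [blockOf_eq hp.disjoint hB hγB]
  exact ⟨hB, hγB⟩

def addSingleton (γ : Fin n) (keep : Bool) (p : PartialState n) : PartialState n :=
  (insert {γ} p.1, if keep then insert {γ} p.2 else p.2)

def eraseSingleton (γ : Fin n) (p : PartialState n) : PartialState n :=
  (p.1.erase {γ}, p.2.erase {γ})

lemma arc_addSingleton_iff (keep : Bool) (p : PartialState n) (i l : Fin n) :
    arc (addSingleton γ keep p).1 i l ↔ arc p.1 i l := by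
  constructor
  · rintro ⟨hil, B, hB, hiB, hlB, hgap⟩
    rcases mem_insert.mp hB with rfl | hB
    · rw [mem_singleton] at hiB hlB
      rw [hiB, hlB] at hil
      exact absurd hil (lt_irrefl γ)
    · exact ⟨hil, B, hB, hiB, hlB, hgap⟩
  · rintro ⟨hil, B, hB, hrest⟩
    exact ⟨hil, B, mem_insert_of_mem hB, hrest⟩

lemma covered_addSingleton_iff (keep : Bool) (p : PartialState n) {j : Fin n} (hj : j < γ)
    (l : Fin n) : Covered (addSingleton γ keep p) j l ↔ Covered p j l := by
  unfold Covered
  simp only [arc_addSingleton_iff]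
  refine or_congr_right ⟨?_, fun ⟨C, hC, hCj⟩ => ⟨C, ?_, hCj⟩⟩
  · rintro ⟨C, hC, hCj⟩
    cases keep
    · exact ⟨C, hC, hCj⟩
    · rcases mem_insert.mp hC with rfl | hC
      · exact absurd (hCj γ (mem_singleton_self γ)) (lt_asymm hj)
      · exact ⟨C, hC, hCj⟩
  · cases keep
    exacts [hC, mem_insert_of_mem hC]

lemma partialWeight_addSingleton (x y v : R) (hp : IsPartialPartition m p) (hγ : (γ : ℕ) = m)
    (keep : Bool) :
    partialWeight x y v (addSingleton γ keep p) = x * partialWeight x y v p := by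
  have hcov : ∀ j l, arc p.1 j l → (Covered (addSingleton γ keep p) j l ↔ Covered p j l) :=
    fun j l hjl => covered_addSingleton_iff keep p (Fin.lt_def.mpr (by
      have := (hp.lt_of_arc hjl).1; omega)) l
  have hcard : (addSingleton γ keep p).1.card = p.1.card + 1 :=
    card_insert_of_notMem fun h => hp.notMem hγ h (mem_singleton_self γ)
  rw [partialWeight, partialWeight, hcard,
    arcCount_congr (arc_addSingleton_iff keep p) fun j l h => not_congr (hcov j l h),
    arcCount_congr (arc_addSingleton_iff keep p) hcov, pow_succ]
  ring

lemma IsPartialPartition.addSingleton (hp : IsPartialPartition m p) (hγ : (γ : ℕ) = m)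
    (keep : Bool) : IsPartialPartition (m + 1) (addSingleton γ keep p) where
  nonempty B hB := by
    rcases mem_insert.mp hB with rfl | hB
    exacts [singleton_nonempty γ, hp.nonempty B hB]
  val_lt B hB i hi := by
    rcases mem_insert.mp hB with rfl | hB
    · rw [mem_singleton.mp hi]
      omega
    · have := hp.val_lt B hB i hi
      omega
  exists_mem i hi := by
    rcases Nat.lt_succ_iff_lt_or_eq.mp hi with hi | hi
    · obtain ⟨B, hB, hiB⟩ := hp.exists_mem i hi
      exact ⟨B, mem_insert_of_mem hB, hiB⟩
    · exact ⟨{γ}, mem_insert_self _ _, mem_singleton.mpr (Fin.ext (hi.trans hγ.symm))⟩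
  disjoint := hp.disjoint.insert fun C hC i hi => by
    rw [mem_singleton.mp hi]
    exact hp.notMem hγ hC
  open_subset := by
    cases keep
    exacts [hp.open_subset.trans (subset_insert _ _), insert_subset_insert _ hp.open_subset]

lemma card_addSingleton_snd (hp : IsPartialPartition m p) (hγ : (γ : ℕ) = m) (keep : Bool) :
    (addSingleton γ keep p).2.card = p.2.card + keep.toNat := by
  cases keep
  · rfl
  · exact card_insert_of_notMem fun h => hp.notMem hγ (hp.open_subset h) (mem_singleton_self γ)

lemma blockOf_addSingleton (hp : IsPartialPartition m p) (hγ : (γ : ℕ) = m) (keep : Bool) :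
    blockOf (addSingleton γ keep p).1 γ = {γ} :=
  blockOf_eq (hp.addSingleton hγ keep).disjoint (mem_insert_self _ _) (mem_singleton_self γ)

lemma singleton_mem_addSingleton_snd_iff (hp : IsPartialPartition m p) (hγ : (γ : ℕ) = m)
    (keep : Bool) : {γ} ∈ (addSingleton γ keep p).2 ↔ keep := by
  cases keep
  · simpa [addSingleton] using fun h => hp.notMem hγ (hp.open_subset h) (mem_singleton_self γ)
  · simp [addSingleton]

lemma IsPartialPartition.eraseSingleton (hp : IsPartialPartition (m + 1) p)
    (hγ : (γ : ℕ) = m) (hsingle : {γ} ∈ p.1) : IsPartialPartition m (eraseSingleton γ p) where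
  nonempty B hB := hp.nonempty B (mem_of_mem_erase hB)
  val_lt B hB i hi := by
    have hiγ : i ≠ γ := by
      rintro rfl
      exact ne_of_mem_erase hB (hp.disjoint B (mem_of_mem_erase hB) {i} hsingle i hi
        (mem_singleton_self i))
    have := hp.val_lt B (mem_of_mem_erase hB) i hi
    have : (i : ℕ) ≠ m := fun h => hiγ (Fin.ext (h.trans hγ.symm))
    omega
  exists_mem i hi := by
    obtain ⟨B, hB, hiB⟩ := hp.exists_mem i (by omega)
    refine ⟨B, mem_erase.mpr ⟨?_, hB⟩, hiB⟩
    rintro rfl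
    rw [mem_singleton.mp hiB] at hi
    omega
  disjoint := hp.disjoint.mono (erase_subset _ _)
  open_subset := erase_subset_erase _ hp.open_subset

lemma eraseSingleton_addSingleton (hp : IsPartialPartition m p) (hγ : (γ : ℕ) = m)
    (keep : Bool) : eraseSingleton γ (addSingleton γ keep p) = p := by
  have hQ : {γ} ∉ p.1 := fun h => hp.notMem hγ h (mem_singleton_self γ)
  have hO : {γ} ∉ p.2 := fun h => hQ (hp.open_subset h)
  cases keep <;> simp [eraseSingleton, addSingleton, erase_insert hQ, erase_insert hO,
    erase_eq_of_notMem hO]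

lemma addSingleton_eraseSingleton (hsingle : {γ} ∈ p.1) {keep : Bool}
    (hkeep : {γ} ∈ p.2 ↔ keep) : addSingleton γ keep (eraseSingleton γ p) = p := by
  cases keep
  · simp only [Bool.false_eq_true, iff_false] at hkeep
    simp [addSingleton, eraseSingleton, insert_erase hsingle, erase_eq_of_notMem hkeep]
  · simp only [iff_true] at hkeep
    simp [addSingleton, eraseSingleton, insert_erase hsingle, insert_erase hkeep]

def joinBlock (γ : Fin n) (keep : Bool) (B : Finset (Fin n)) (p : PartialState n) :
    PartialState n :=
  (insert (insert γ B) (p.1.erase B),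
    if keep then insert (insert γ B) (p.2.erase B) else p.2.erase B)

def detachBlock (γ : Fin n) (p : PartialState n) : Finset (Fin n) :=
  (blockOf p.1 γ).erase γ

def detachState (γ : Fin n) (p : PartialState n) : PartialState n :=
  (insert (detachBlock γ p) (p.1.erase (blockOf p.1 γ)),
    insert (detachBlock γ p) (p.2.erase (blockOf p.1 γ)))

lemma erase_subset_joinBlock_snd (keep : Bool) (B : Finset (Fin n)) (p : PartialState n) :
    p.2.erase B ⊆ (joinBlock γ keep B p).2 := by
  cases keep
  exacts [subset_rfl, subset_insert _ _]

lemma mem_joinBlock_snd {keep : Bool} {C : Finset (Fin n)} (hC : C ∈ (joinBlock γ keep B p).2) :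
    C = insert γ B ∨ C ∈ p.2.erase B := by
  cases keep
  exacts [Or.inr hC, mem_insert.mp hC]

lemma arc_joinBlock_iff (hp : IsPartialPartition m p) (hγ : (γ : ℕ) = m) (keep : Bool)
    (hB : B ∈ p.1) {t : Fin n} (htB : t ∈ B) (htmax : ∀ j ∈ B, j ≤ t) (i l : Fin n) :
    arc (joinBlock γ keep B p).1 i l ↔ arc p.1 i l ∨ (i = t ∧ l = γ) := by
  have hlt_γ : ∀ j ∈ B, j < γ := fun j hj => Fin.lt_def.mpr (by have := hp.val_lt B hB j hj; omega)
  constructor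
  · rintro ⟨hil, C, hC, hiC, hlC, hgap⟩
    rcases mem_insert.mp hC with rfl | hC
    · have hl_le : l ≤ γ := by
        rcases mem_insert.mp hlC with h | h
        exacts [h.le, (hlt_γ l h).le]
      have hiB : i ∈ B := (mem_insert.mp hiC).resolve_left fun hiγ => by
        rw [hiγ] at hil
        exact not_lt.mpr hl_le hil
      rcases mem_insert.mp hlC with rfl | hlB
      · refine Or.inr ⟨(htmax i hiB).antisymm (not_lt.mp fun hit => ?_), rfl⟩
        exact hgap t (mem_insert_of_mem htB) ⟨hit, hlt_γ t htB⟩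
      · exact Or.inl ⟨hil, B, hB, hiB, hlB, fun k hk => hgap k (mem_insert_of_mem hk)⟩
    · exact Or.inl ⟨hil, C, mem_of_mem_erase hC, hiC, hlC, hgap⟩
  · rintro (⟨hil, C, hC, hiC, hlC, hgap⟩ | ⟨rfl, hlγ⟩)
    · by_cases hCB : C = B
      · subst hCB
        refine ⟨hil, insert γ C, mem_insert_self _ _, mem_insert_of_mem hiC,
          mem_insert_of_mem hlC, fun k hk hik => ?_⟩
        rcases mem_insert.mp hk with rfl | hk
        · exact lt_asymm hik.2 (hlt_γ l hlC)
        · exact hgap k hk hik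
      · exact ⟨hil, C, mem_insert_of_mem (mem_erase.mpr ⟨hCB, hC⟩), hiC, hlC, hgap⟩
    · rw [hlγ]
      refine ⟨hlt_γ i htB, insert γ B, mem_insert_self _ _, mem_insert_of_mem htB,
        mem_insert_self _ _, fun k hk hik => ?_⟩
      rcases mem_insert.mp hk with rfl | hk
      · exact lt_irrefl _ hik.2
      · exact not_lt.mpr (htmax k hk) hik.1

/-- The new arc `(t, γ)` takes over the covering role of the open block `B`. -/
lemma covered_joinBlock_iff (hp : IsPartialPartition m p) (hγ : (γ : ℕ) = m) (keep : Bool)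
    (hB : B ∈ p.2) {t : Fin n} (htB : t ∈ B) (htmax : ∀ j ∈ B, j ≤ t) {j l : Fin n}
    (hjl : arc p.1 j l) : Covered (joinBlock γ keep B p) j l ↔ Covered p j l := by
  have harc := arc_joinBlock_iff hp hγ keep (hp.open_subset hB) htB htmax
  have hl_γ : l < γ := Fin.lt_def.mpr (by have := (hp.lt_of_arc hjl).2; omega)
  constructor
  · rintro (⟨a, b, hab, haj, hlb⟩ | ⟨C, hC, hCj⟩)
    · rcases (harc a b).mp hab with hab | ⟨rfl, rfl⟩
      · exact Or.inl ⟨a, b, hab, haj, hlb⟩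
      · exact Or.inr ⟨B, hB, fun i hi => (htmax i hi).trans_lt haj⟩
    · rcases mem_joinBlock_snd hC with rfl | hC
      · exact absurd (hCj γ (mem_insert_self _ _)) (lt_asymm (hjl.1.trans hl_γ))
      · exact Or.inr ⟨C, mem_of_mem_erase hC, hCj⟩
  · rintro (⟨a, b, hab, haj, hlb⟩ | ⟨C, hC, hCj⟩)
    · exact Or.inl ⟨a, b, (harc a b).mpr (Or.inl hab), haj, hlb⟩
    · by_cases hCB : C = B
      · subst hCB
        exact Or.inl ⟨t, γ, (harc t γ).mpr (Or.inr ⟨rfl, rfl⟩), hCj t htB, hl_γ⟩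
      · exact Or.inr ⟨C, erase_subset_joinBlock_snd keep B p (mem_erase.mpr ⟨hCB, hC⟩), hCj⟩

def OpenBelow (O : Finset (Finset (Fin n))) (B : Finset (Fin n)) : Prop :=
  ∃ C ∈ O.erase B, ∃ u ∈ B, ∀ i ∈ C, i < u

open Classical in
noncomputable def joinWeight (y v : R) (O : Finset (Finset (Fin n))) (B : Finset (Fin n)) : R :=
  if OpenBelow O B then v else y

lemma covered_joinBlock_new_iff (hp : IsPartialPartition m p) (hγ : (γ : ℕ) = m) (keep : Bool)
    (hB : B ∈ p.2) {t : Fin n} (htB : t ∈ B) (htmax : ∀ j ∈ B, j ≤ t) :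
    Covered (joinBlock γ keep B p) t γ ↔ OpenBelow p.2 B := by
  have harc := arc_joinBlock_iff hp hγ keep (hp.open_subset hB) htB htmax
  have ht_γ : t < γ := Fin.lt_def.mpr (by have := hp.val_lt B (hp.open_subset hB) t htB; omega)
  constructor
  · rintro (⟨a, b, hab, -, hγb⟩ | ⟨C, hC, hCt⟩)
    · rcases (harc a b).mp hab with hab | ⟨-, rfl⟩
      · exact absurd hγb (not_lt.mpr (Fin.le_def.mpr (by have := (hp.lt_of_arc hab).2; omega)))
      · exact absurd hγb (lt_irrefl _)
    · rcases mem_joinBlock_snd hC with rfl | hC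
      · exact absurd (hCt γ (mem_insert_self _ _)) (lt_asymm ht_γ)
      · exact ⟨C, hC, t, htB, hCt⟩
  · rintro ⟨C, hC, u, huB, hCu⟩
    exact Or.inr ⟨C, erase_subset_joinBlock_snd keep B p hC,
      fun i hi => (hCu i hi).trans_le (htmax u huB)⟩

lemma IsPartialPartition.joinBlock (hp : IsPartialPartition m p) (hγ : (γ : ℕ) = m)
    (keep : Bool) (hB : B ∈ p.2) : IsPartialPartition (m + 1) (joinBlock γ keep B p) where
  nonempty C hC := by
    rcases mem_insert.mp hC with rfl | hC
    exacts [insert_nonempty γ B, hp.nonempty C (mem_of_mem_erase hC)]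
  val_lt C hC i hi := by
    rcases mem_insert.mp hC with rfl | hC
    · rcases mem_insert.mp hi with rfl | hi
      · omega
      · have := hp.val_lt B (hp.open_subset hB) i hi
        omega
    · have := hp.val_lt C (mem_of_mem_erase hC) i hi
      omega
  exists_mem i hi := by
    rcases Nat.lt_succ_iff_lt_or_eq.mp hi with hi | hi
    · obtain ⟨C, hC, hiC⟩ := hp.exists_mem i hi
      by_cases hCB : C = B
      · exact ⟨insert γ B, mem_insert_self _ _, mem_insert_of_mem (hCB ▸ hiC)⟩
      · exact ⟨C, mem_insert_of_mem (mem_erase.mpr ⟨hCB, hC⟩), hiC⟩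
    · refine ⟨insert γ B, mem_insert_self _ _, ?_⟩
      rw [Fin.ext (hi.trans hγ.symm)]
      exact mem_insert_self _ _
  disjoint := (hp.disjoint.mono (erase_subset _ _)).insert fun C hC i hi hiC => by
    rcases mem_insert.mp hi with rfl | hi
    · exact hp.notMem hγ (mem_of_mem_erase hC) hiC
    · exact ne_of_mem_erase hC
        (hp.disjoint C (mem_of_mem_erase hC) B (hp.open_subset hB) i hiC hi)
  open_subset := by
    cases keep
    · exact (erase_subset_erase _ hp.open_subset).trans (subset_insert _ _)
    · exact insert_subset_insert _ (erase_subset_erase _ hp.open_subset)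

lemma partialWeight_joinBlock (x y v : R) (hp : IsPartialPartition m p) (hγ : (γ : ℕ) = m)
    (keep : Bool) (hB : B ∈ p.2) :
    partialWeight x y v (joinBlock γ keep B p) = joinWeight y v p.2 B * partialWeight x y v p := by
  classical
  have hBQ := hp.open_subset hB
  set t := B.max' (hp.nonempty B hBQ)
  have htB : t ∈ B := B.max'_mem _
  have htmax : ∀ j ∈ B, j ≤ t := fun j hj => B.le_max' j hj
  have harc := arc_joinBlock_iff hp hγ keep hBQ htB htmax
  have ht := not_arc_of_forall_le hp.disjoint hBQ htB htmax
  have hcov := fun j l (hjl : arc p.1 j l) => covered_joinBlock_iff hp hγ keep hB htB htmax hjl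
  have hcard : (joinBlock γ keep B p).1.card = p.1.card := by
    rw [joinBlock, card_insert_of_notMem fun h => hp.notMem hγ (mem_of_mem_erase h)
      (mem_insert_self γ B), card_erase_add_one hBQ]
  rw [partialWeight, partialWeight, hcard,
    arcCount_of_arc_iff harc ht fun j l h => not_congr (hcov j l h),
    arcCount_of_arc_iff harc ht hcov, covered_joinBlock_new_iff hp hγ keep hB htB htmax,
    joinWeight]
  split_ifs <;> ring

lemma openBelow_iff_ne {O : Finset (Finset (Fin n))} (hne : ∀ B ∈ O, B.Nonempty)
    (hO : BlocksDisjoint O) {B₀ : Finset (Fin n)} (hB₀ : B₀ ∈ O)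
    (hmin : ∀ B ∈ O, bmax B₀ ≤ bmax B) (hB : B ∈ O) : OpenBelow O B ↔ B ≠ B₀ := by
  constructor
  · rintro ⟨C, hC, u, huB, hCu⟩ rfl
    obtain ⟨c, hcC, hc⟩ := exists_mem_val_eq_bmax (hne C (mem_of_mem_erase hC))
    have := hmin C (mem_of_mem_erase hC)
    have := le_bmax huB
    have := Fin.lt_def.mp (hCu c hcC)
    omega
  · intro hBB₀
    obtain ⟨u, huB, hu⟩ := exists_mem_val_eq_bmax (hne B hB)
    obtain ⟨u₀, hu₀B₀, hu₀⟩ := exists_mem_val_eq_bmax (hne B₀ hB₀)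
    have hlt : bmax B₀ < bmax B := (hmin B hB).lt_of_ne fun h =>
      hBB₀ (hO B hB B₀ hB₀ u huB (Fin.ext (hu.trans (h.symm.trans hu₀.symm)) ▸ hu₀B₀))
    refine ⟨B₀, mem_erase.mpr ⟨Ne.symm hBB₀, hB₀⟩, u, huB, fun i hi => Fin.lt_def.mpr ?_⟩
    have := le_bmax hi
    omega

lemma sum_joinWeight (y v : R) {O : Finset (Finset (Fin n))} (hne : ∀ B ∈ O, B.Nonempty)
    (hO : BlocksDisjoint O) (hO_ne : O.Nonempty) :
    ∑ B ∈ O, joinWeight y v O B = y + ((O.card - 1 : ℕ) : R) * v := by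
  classical
  obtain ⟨B₀, hB₀, hmin⟩ := exists_min_image O bmax hO_ne
  have hopen B (hB : B ∈ O) := openBelow_iff_ne hne hO hB₀ hmin hB
  have hv : ∀ B ∈ O.erase B₀, joinWeight y v O B = v := fun B hB =>
    if_pos ((hopen B (mem_of_mem_erase hB)).mpr (ne_of_mem_erase hB))
  have hy : joinWeight y v O B₀ = y := if_neg fun h => (hopen B₀ hB₀).mp h rfl
  rw [← add_sum_erase O _ hB₀, hy, sum_congr rfl hv, sum_const, card_erase_of_mem hB₀,
    nsmul_eq_mul]

lemma card_joinBlock_snd (hp : IsPartialPartition m p) (hγ : (γ : ℕ) = m) (keep : Bool)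
    (hB : B ∈ p.2) : (joinBlock γ keep B p).2.card + 1 = p.2.card + keep.toNat := by
  cases keep
  · exact card_erase_add_one hB
  · rw [joinBlock, if_pos rfl, card_insert_of_notMem fun h => hp.notMem hγ
      (hp.open_subset (mem_of_mem_erase h)) (mem_insert_self γ B), card_erase_add_one hB]
    rfl

lemma blockOf_joinBlock (hp : IsPartialPartition m p) (hγ : (γ : ℕ) = m) (keep : Bool)
    (hB : B ∈ p.2) : blockOf (joinBlock γ keep B p).1 γ = insert γ B :=
  blockOf_eq (hp.joinBlock hγ keep hB).disjoint (mem_insert_self _ _) (mem_insert_self _ _)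

lemma insert_mem_joinBlock_snd_iff (hp : IsPartialPartition m p) (hγ : (γ : ℕ) = m)
    (keep : Bool) : insert γ B ∈ (joinBlock γ keep B p).2 ↔ keep := by
  cases keep
  · simpa [joinBlock] using fun _ h => hp.notMem hγ (hp.open_subset h) (mem_insert_self γ B)
  · simp [joinBlock]

lemma detach_joinBlock (hp : IsPartialPartition m p) (hγ : (γ : ℕ) = m) (keep : Bool)
    (hB : B ∈ p.2) :
    detachState γ (joinBlock γ keep B p) = p ∧ detachBlock γ (joinBlock γ keep B p) = B := by
  have hγB : γ ∉ B := hp.notMem hγ (hp.open_subset hB)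
  have hQ : insert γ B ∉ p.1.erase B := fun h =>
    hp.notMem hγ (mem_of_mem_erase h) (mem_insert_self γ B)
  have hO : insert γ B ∉ p.2.erase B := fun h => hQ (erase_subset_erase _ hp.open_subset h)
  have hblock : detachBlock γ (joinBlock γ keep B p) = B := by
    rw [detachBlock, blockOf_joinBlock hp hγ keep hB, erase_insert hγB]
  refine ⟨?_, hblock⟩
  rw [detachState, hblock, blockOf_joinBlock hp hγ keep hB]
  cases keep <;>
    simp [joinBlock, erase_insert hQ, erase_insert hO, erase_eq_of_notMem hO,
      insert_erase (hp.open_subset hB), insert_erase hB]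

lemma IsPartialPartition.detachState (hp : IsPartialPartition (m + 1) p) (hγ : (γ : ℕ) = m)
    (hne : blockOf p.1 γ ≠ {γ}) : IsPartialPartition m (detachState γ p) := by
  obtain ⟨hB'Q, hγB'⟩ := hp.blockOf_mem hγ
  set B' := blockOf p.1 γ
  have hlt : ∀ C ∈ p.1, ∀ i ∈ C, i ≠ γ → (i : ℕ) < m := fun C hC i hi hiγ => by
    have := hp.val_lt C hC i hi
    have : (i : ℕ) ≠ m := fun h => hiγ (Fin.ext (h.trans hγ.symm))
    omega
  have hfresh : ∀ C ∈ p.1.erase B', ∀ i ∈ B'.erase γ, i ∉ C := fun C hC i hi hiC =>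
    ne_of_mem_erase hC (hp.disjoint C (mem_of_mem_erase hC) B' hB'Q i hiC (mem_of_mem_erase hi))
  refine ⟨fun C hC => ?_, fun C hC i hi => ?_, fun i hi => ?_,
    (hp.disjoint.mono (erase_subset _ _)).insert hfresh,
    insert_subset_insert _ (erase_subset_erase _ hp.open_subset)⟩
  · rcases mem_insert.mp hC with rfl | hC
    · exact (erase_nonempty hγB').mpr ((nontrivial_iff_ne_singleton hγB').mpr hne)
    · exact hp.nonempty C (mem_of_mem_erase hC)
  · rcases mem_insert.mp hC with rfl | hC
    · exact hlt B' hB'Q i (mem_of_mem_erase hi) (ne_of_mem_erase hi)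
    · exact hlt C (mem_of_mem_erase hC) i hi fun h =>
        ne_of_mem_erase hC (hp.disjoint C (mem_of_mem_erase hC) B' hB'Q i hi (h ▸ hγB'))
  · obtain ⟨C, hC, hiC⟩ := hp.exists_mem i (by omega)
    by_cases hCB' : C = B'
    · refine ⟨B'.erase γ, mem_insert_self _ _, mem_erase.mpr ⟨fun h => ?_, hCB' ▸ hiC⟩⟩
      rw [h] at hi
      omega
    · exact ⟨C, mem_insert_of_mem (mem_erase.mpr ⟨hCB', hC⟩), hiC⟩

lemma joinBlock_detach (hp : IsPartialPartition (m + 1) p) (hγ : (γ : ℕ) = m)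
    (hne : blockOf p.1 γ ≠ {γ}) {keep : Bool} (hkeep : blockOf p.1 γ ∈ p.2 ↔ keep) :
    joinBlock γ keep (detachBlock γ p) (detachState γ p) = p := by
  obtain ⟨hB'Q, hγB'⟩ := hp.blockOf_mem hγ
  have hD_nonempty : (detachBlock γ p).Nonempty :=
    (erase_nonempty hγB').mpr ((nontrivial_iff_ne_singleton hγB').mpr hne)
  have hDQ : detachBlock γ p ∉ p.1 := fun hD => by
    obtain ⟨i, hi⟩ := hD_nonempty
    have hDB' := hp.disjoint _ hD _ hB'Q i hi (mem_of_mem_erase hi)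
    rw [← hDB'] at hγB'
    exact notMem_erase γ _ hγB'
  have hDO : detachBlock γ p ∉ p.2 := fun h => hDQ (hp.open_subset h)
  have hinsert : insert γ (detachBlock γ p) = blockOf p.1 γ := insert_erase hγB'
  cases keep
  · simp only [Bool.false_eq_true, iff_false] at hkeep
    simp [joinBlock, detachState, hinsert, erase_insert (fun h => hDQ (mem_of_mem_erase h)),
      insert_erase hB'Q, erase_eq_of_notMem hkeep, erase_eq_of_notMem hDO]
  · simp only [iff_true] at hkeep
    simp [joinBlock, detachState, hinsert, erase_insert (fun h => hDQ (mem_of_mem_erase h)),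
      erase_insert (fun h => hDO (mem_of_mem_erase h)), insert_erase hB'Q, insert_erase hkeep]

lemma partialSum_eq_sum_bool (x y v : R) (h : ℕ) (γ : Fin n) :
    partialSum x y v n m h = ∑ keep : Bool,
      ((∑ p ∈ (partialStates n m h).filter
          (fun p => blockOf p.1 γ = {γ} ∧ (blockOf p.1 γ ∈ p.2 ↔ keep)), partialWeight x y v p) +
        ∑ p ∈ (partialStates n m h).filter
          (fun p => blockOf p.1 γ ≠ {γ} ∧ (blockOf p.1 γ ∈ p.2 ↔ keep)),
          partialWeight x y v p) := by
  simp only [sum_filter, ← sum_add_distrib]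
  rw [sum_comm, partialSum]
  refine sum_congr rfl fun p _ => ?_
  rw [Fintype.sum_bool]
  generalize blockOf p.1 γ = B
  rcases eq_or_ne B {γ} with rfl | hB
  · by_cases hopen : {γ} ∈ p.2 <;> simp [hopen]
  · by_cases hopen : B ∈ p.2 <;> simp [hB, hopen]

lemma sum_filter_blockOf_eq_singleton (x y v : R) (hγ : (γ : ℕ) = m) (keep : Bool) {h h' : ℕ}
    (hh : h' = h + keep.toNat) :
    ∑ p ∈ (partialStates n (m + 1) h').filter
        (fun p => blockOf p.1 γ = {γ} ∧ (blockOf p.1 γ ∈ p.2 ↔ keep)), partialWeight x y v p =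
      x * partialSum x y v n m h := by
  subst hh
  have hinv : ∀ p ∈ (partialStates n (m + 1) (h + keep.toNat)).filter
      (fun p => blockOf p.1 γ = {γ} ∧ (blockOf p.1 γ ∈ p.2 ↔ keep)),
      IsPartialPartition m (eraseSingleton γ p) ∧ addSingleton γ keep (eraseSingleton γ p) = p ∧
        p.2.card = h + keep.toNat := by
    intro p hp
    obtain ⟨⟨hp, hcard⟩, hsingle, hkeep⟩ := by simpa [mem_partialStates] using hp
    have hsingleQ : {γ} ∈ p.1 := hsingle ▸ (hp.blockOf_mem hγ).1
    rw [hsingle] at hkeep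
    exact ⟨hp.eraseSingleton hγ hsingleQ, addSingleton_eraseSingleton hsingleQ hkeep, hcard⟩
  rw [partialSum, mul_sum]
  refine sum_nbij' (eraseSingleton γ) (addSingleton γ keep) (fun p hp => ?_) (fun q hq => ?_)
    (fun p hp => (hinv p hp).2.1) (fun q hq => ?_) (fun p hp => ?_)
  · obtain ⟨hq, hadd, hcard⟩ := hinv p hp
    have := card_addSingleton_snd hq hγ keep
    rw [hadd] at this
    exact mem_partialStates.mpr ⟨hq, by omega⟩
  · obtain ⟨hq, hcard⟩ := mem_partialStates.mp hq
    refine mem_filter.mpr ⟨mem_partialStates.mpr ⟨hq.addSingleton hγ keep, ?_⟩,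
      blockOf_addSingleton hq hγ keep, ?_⟩
    · rw [card_addSingleton_snd hq hγ keep, hcard]
    · rw [blockOf_addSingleton hq hγ keep]
      exact singleton_mem_addSingleton_snd_iff hq hγ keep
  · exact eraseSingleton_addSingleton (mem_partialStates.mp hq).1 hγ keep
  · obtain ⟨hq, hadd, -⟩ := hinv p hp
    conv_lhs => rw [← hadd]
    exact partialWeight_addSingleton x y v hq hγ keep

lemma sum_filter_blockOf_ne_singleton_eq_sum_sigma (x y v : R) (hγ : (γ : ℕ) = m) (keep : Bool)
    (h : ℕ) :
    ∑ p ∈ (partialStates n (m + 1) (h + keep.toNat)).filter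
        (fun p => blockOf p.1 γ ≠ {γ} ∧ (blockOf p.1 γ ∈ p.2 ↔ keep)), partialWeight x y v p =
      ∑ q ∈ (partialStates n m (h + 1)).sigma (·.2),
        joinWeight y v q.1.2 q.2 * partialWeight x y v q.1 := by
  have hinv : ∀ p ∈ (partialStates n (m + 1) (h + keep.toNat)).filter
      (fun p => blockOf p.1 γ ≠ {γ} ∧ (blockOf p.1 γ ∈ p.2 ↔ keep)),
      IsPartialPartition m (detachState γ p) ∧
        joinBlock γ keep (detachBlock γ p) (detachState γ p) = p ∧ p.2.card = h + keep.toNat := by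
    intro p hp
    obtain ⟨⟨hp, hcard⟩, hne, hkeep⟩ := by simpa [mem_partialStates] using hp
    exact ⟨hp.detachState hγ hne, joinBlock_detach hp hγ hne hkeep, hcard⟩
  refine sum_nbij' (fun p => ⟨detachState γ p, detachBlock γ p⟩)
    (fun q => joinBlock γ keep q.2 q.1) (fun p hp => ?_) (fun q hq => ?_)
    (fun p hp => (hinv p hp).2.1) (fun q hq => ?_) (fun p hp => ?_)
  · obtain ⟨hq, hjoin, hcard⟩ := hinv p hp
    have := card_joinBlock_snd hq hγ keep (mem_insert_self _ _)
    rw [hjoin] at this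
    refine mem_sigma.mpr ⟨mem_partialStates.mpr ⟨hq, ?_⟩, mem_insert_self _ _⟩
    dsimp only
    omega
  · obtain ⟨hqS, hB⟩ := mem_sigma.mp hq
    obtain ⟨hq, hcard⟩ := mem_partialStates.mp hqS
    have := card_joinBlock_snd hq hγ keep hB
    refine mem_filter.mpr ⟨mem_partialStates.mpr ⟨hq.joinBlock hγ keep hB, by omega⟩, ?_, ?_⟩
    · rw [blockOf_joinBlock hq hγ keep hB]
      exact insert_ne_singleton_of_notMem (hq.nonempty _ (hq.open_subset hB))
        (hq.notMem hγ (hq.open_subset hB))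
    · rw [blockOf_joinBlock hq hγ keep hB]
      exact insert_mem_joinBlock_snd_iff hq hγ keep
  · obtain ⟨hq, hB⟩ := mem_sigma.mp hq
    obtain ⟨hstate, hblock⟩ := detach_joinBlock (mem_partialStates.mp hq).1 hγ keep hB
    rw [hstate, hblock]
  · obtain ⟨hq, hjoin, -⟩ := hinv p hp
    conv_lhs => rw [← hjoin]
    exact partialWeight_joinBlock x y v hq hγ keep (mem_insert_self _ _)

lemma sum_filter_blockOf_ne_singleton (x y v : R) (hγ : (γ : ℕ) = m) (keep : Bool) {h h' : ℕ}
    (hh : h' = h + keep.toNat) :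
    ∑ p ∈ (partialStates n (m + 1) h').filter
        (fun p => blockOf p.1 γ ≠ {γ} ∧ (blockOf p.1 γ ∈ p.2 ↔ keep)), partialWeight x y v p =
      (y + h * v) * partialSum x y v n m (h + 1) := by
  subst hh
  rw [sum_filter_blockOf_ne_singleton_eq_sum_sigma x y v hγ keep h, sum_sigma, partialSum,
    mul_sum]
  refine sum_congr rfl fun p hp => ?_
  obtain ⟨hp, hcard⟩ := mem_partialStates.mp hp
  dsimp only
  rw [← sum_mul, sum_joinWeight y v (fun B hB => hp.nonempty B (hp.open_subset hB))
    (hp.disjoint.mono hp.open_subset) (card_pos.mp (by omega)), hcard, Nat.add_sub_cancel]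

lemma partialSum_succ_zero (x y v : R) (hm : m < n) :
    partialSum x y v n (m + 1) 0 = x * partialSum x y v n m 0 + y * partialSum x y v n m 1 := by
  have hγ : ((⟨m, hm⟩ : Fin n) : ℕ) = m := rfl
  have hno_open : ∀ (P : PartialState n → Prop) [DecidablePred P],
      ∑ p ∈ (partialStates n (m + 1) 0).filter
        (fun p => P p ∧ (blockOf p.1 ⟨m, hm⟩ ∈ p.2 ↔ true)), partialWeight x y v p = 0 := by
    refine fun P _ => sum_eq_zero fun p hp => ?_
    obtain ⟨⟨-, hcard⟩, -, hopen⟩ := by simpa [mem_partialStates] using hp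
    simp [hcard] at hopen
  rw [partialSum_eq_sum_bool x y v (m := m + 1) 0 ⟨m, hm⟩, Fintype.sum_bool, hno_open, hno_open,
    sum_filter_blockOf_eq_singleton x y v hγ false (h := 0) (h' := 0) rfl,
    sum_filter_blockOf_ne_singleton x y v hγ false (h := 0) (h' := 0) rfl]
  push_cast
  ring

lemma partialSum_succ_succ (x y v : R) (hm : m < n) (h : ℕ) :
    partialSum x y v n (m + 1) (h + 1) =
      x * partialSum x y v n m (h + 1) + x * partialSum x y v n m h +
        (y + h * v) * partialSum x y v n m (h + 1) +
        (y + (h + 1) * v) * partialSum x y v n m (h + 2) := by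
  have hγ : ((⟨m, hm⟩ : Fin n) : ℕ) = m := rfl
  rw [partialSum_eq_sum_bool x y v (m := m + 1) (h + 1) ⟨m, hm⟩, Fintype.sum_bool,
    sum_filter_blockOf_eq_singleton x y v hγ true (h := h) (h' := h + 1) rfl,
    sum_filter_blockOf_ne_singleton x y v hγ true (h := h) (h' := h + 1) rfl,
    sum_filter_blockOf_eq_singleton x y v hγ false (h := h + 1) (h' := h + 1) rfl,
    sum_filter_blockOf_ne_singleton x y v hγ false (h := h + 1) (h' := h + 1) rfl]
  push_cast
  ring

lemma partialSum_eq_pathSum (x y v : R) {α : ℕ → R} (hodd : ∀ h, α (2 * h + 1) = x)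
    (heven : ∀ h : ℕ, α (2 * h + 2) = y + h * v) (hm : m ≤ n) (h : ℕ) :
    partialSum x y v n m h = x ^ h * pathSum α (2 * m) (2 * h) := by
  induction m generalizing h with
  | zero =>
    rw [partialSum_zero, pathSum_zero]
    rcases h with _ | h
    · simp
    · rw [if_neg (by omega), if_neg (by omega), mul_zero]
  | succ m ih =>
    have ih := ih (by omega)
    rw [show 2 * (m + 1) = 2 * m + 2 by ring]
    rcases h with _ | h
    · rw [partialSum_succ_zero x y v (by omega), ih, ih, Nat.cast_zero, mul_zero,
        pathSum_add_two_zero, show α 1 = x from hodd 0, show α 2 = y by simpa using heven 0]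
      norm_num
      ring
    · have hstep := pathSum_add_two α (2 * m) (2 * h + 1)
      rw [show α (2 * h + 1 + 1) = y + h * v from heven h,
        show α (2 * h + 1 + 2) = x by simpa [mul_add, add_assoc] using hodd (h + 1),
        show α (2 * h + 1 + 3) = y + (h + 1) * v by simpa [mul_add, add_assoc] using heven (h + 1)]
        at hstep
      push_cast at hstep
      rw [show (2 : ℤ) * h + 1 + 1 = 2 * (h + 1) by ring, show (2 : ℤ) * h + 1 - 1 = 2 * h by ring,
        show (2 : ℤ) * h + 1 + 3 = 2 * (h + 2) by ring] at hstep
      rw [partialSum_succ_succ x y v (by omega), ih, ih, ih]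
      push_cast
      rw [hstep]
      ring

end PartialPartitions

open Classical in
/-- S-fraction for set partitions, Theorem 3.1 of Sokal–Zeng. -/
theorem statement13 {R : Type*} [CommRing R] (x y v : R) (n : ℕ) :
    (∑ P ∈ setPartitions n,
        x ^ P.card * y ^ perecP P * v ^ (n - P.card - perecP P)) =
      ∑ ω ∈ dyckPaths (2 * n),
        sweight (fun h =>
          if h % 2 = 1 then x else y + ((h / 2 - 1 : ℕ) : R) * v) ω := by
  set α : ℕ → R := fun h => if h % 2 = 1 then x else y + ((h / 2 - 1 : ℕ) : R) * v
  have hodd (h : ℕ) : α (2 * h + 1) = x := if_pos (by omega)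
  have heven (h : ℕ) : α (2 * h + 2) = y + h * v := by
    rw [show α (2 * h + 2) = y + (((2 * h + 2) / 2 - 1 : ℕ) : R) * v from if_neg (by omega),
      show (2 * h + 2) / 2 - 1 = h by omega]
  rw [← partialSum_length, sum_dyckPaths_sweight, partialSum_eq_pathSum x y v hodd heven le_rfl 0,
    pow_zero, one_mul, Nat.cast_zero, mul_zero]

end Paper
end
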